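/- arXiv:2307.10672 — 9 statements merged into one kernel-verified Lean document; each statement's English description precedes it below -/
import Mathlib

section
/- Let Q be a finite set of pairwise non-overlapping axis-parallel placed rectangles in the plane. Define a directed graph D on vertex set Q by putting an arc from R to R' whenever the bottom side of R intersects the top side of R' in more than a single point, or the left side of R intersects the right side of R' in more than a single point. Then D has no directed cycle. -/
/-- A placed axis-parallel rectangle `[x, x+w] × [y, y+h]`. -/
structure PRect where
  x : ℝ
  y : ℝ
  w : ℝ
  h : ℝ

namespace PRect

/-- The rectangle as a subset of the plane. -/
def toSet (R : PRect) : Set (ℝ × ℝ) :=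
  Set.Icc R.x (R.x + R.w) ×ˢ Set.Icc R.y (R.y + R.h)

/-- The (open) interior of a placed rectangle. -/
def inter (R : PRect) : Set (ℝ × ℝ) :=
  Set.Ioo R.x (R.x + R.w) ×ˢ Set.Ioo R.y (R.y + R.h)

/-- Two placed rectangles overlap if their interiors intersect. -/
def Overlap (R R' : PRect) : Prop := (R.inter ∩ R'.inter).Nonempty

/-- The rectangle has positive width and height. -/
def Proper (R : PRect) : Prop := 0 < R.w ∧ 0 < R.h

/-- The left side `{x} × [y, y+h]`. -/
def leftSide (R : PRect) : Set (ℝ × ℝ) := {R.x} ×ˢ Set.Icc R.y (R.y + R.h)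

/-- The right side `{x+w} × [y, y+h]`. -/
def rightSide (R : PRect) : Set (ℝ × ℝ) := {R.x + R.w} ×ˢ Set.Icc R.y (R.y + R.h)

/-- The bottom side `[x, x+w] × {y}`. -/
def bottomSide (R : PRect) : Set (ℝ × ℝ) := Set.Icc R.x (R.x + R.w) ×ˢ {R.y}

/-- The top side `[x, x+w] × {y+h}`. -/
def topSide (R : PRect) : Set (ℝ × ℝ) := Set.Icc R.x (R.x + R.w) ×ˢ {R.y + R.h}

end PRect

/-- There is an arc from `R` to `R'` if the bottom side of `R` intersects the top side
of `R'` in more than a single point, or the left side of `R` intersects the right side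
of `R'` in more than a single point. -/
def Arc (R R' : PRect) : Prop :=
  ¬ (R.bottomSide ∩ R'.topSide).Subsingleton ∨ ¬ (R.leftSide ∩ R'.rightSide).Subsingleton

/-!
Every rectangle of a directed cycle receives an arc, i.e. has a rectangle of the cycle sitting
in its upper shadow (above its top line, overlapping it horizontally) or in its right shadow.
So it suffices to find, in any finite packing, a rectangle `B` with both shadows empty.
Call `B` upper-right free if every rectangle lying above the top line of `B` lies left of the
left line of `B`. A rectangle with the highest top is upper-right free; take an upper-right free
`B` with the rightmost left side. Its upper shadow is empty, and if its right shadow were not,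
the rectangle there with the highest top would be upper-right free (by disjointness from `B`)
and would have a larger left side than `B`.
-/

open Set

theorem lt_and_lt_of_mem_Icc_inter {α : Type*} [LinearOrder α] {a b c d p q : α}
    (hp : p ∈ Icc a b ∩ Icc c d) (hq : q ∈ Icc a b ∩ Icc c d) (hpq : p ≠ q) :
    a < d ∧ c < b := by
  obtain ⟨⟨hap, hpb⟩, hcp, hpd⟩ := hp
  obtain ⟨⟨haq, hqb⟩, hcq, hqd⟩ := hq
  rcases hpq.lt_or_gt with h | h
  · exact ⟨hap.trans_lt (h.trans_le hqd), hcp.trans_lt (h.trans_le hqb)⟩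
  · exact ⟨haq.trans_lt (h.trans_le hpd), hcq.trans_lt (h.trans_le hpb)⟩

namespace PRect

def IsAbove (C B : PRect) : Prop :=
  B.y + B.h ≤ C.y ∧ C.x < B.x + B.w ∧ B.x < C.x + C.w

def IsRightOf (C B : PRect) : Prop :=
  B.x + B.w ≤ C.x ∧ C.y < B.y + B.h ∧ B.y < C.y + C.h

theorem isAbove_of_nontrivial_bottomSide_inter_topSide {R R' : PRect}
    (h : (R.bottomSide ∩ R'.topSide).Nontrivial) : R.IsAbove R' := by
  rw [bottomSide, topSide, prod_inter_prod] at h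
  obtain ⟨⟨p, y⟩, ⟨hp, rfl, hy⟩, ⟨q, y'⟩, ⟨hq, rfl, -⟩, hpq⟩ := h
  exact ⟨(eq_of_mem_singleton hy).ge,
    lt_and_lt_of_mem_Icc_inter hp hq fun h => hpq (Prod.ext h rfl)⟩

theorem isRightOf_of_nontrivial_leftSide_inter_rightSide {R R' : PRect}
    (h : (R.leftSide ∩ R'.rightSide).Nontrivial) : R.IsRightOf R' := by
  rw [leftSide, rightSide, prod_inter_prod] at h
  obtain ⟨⟨x, p⟩, ⟨⟨rfl, hx⟩, hp⟩, ⟨x', q⟩, ⟨⟨rfl, -⟩, hq⟩, hpq⟩ := h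
  exact ⟨(eq_of_mem_singleton hx).ge,
    lt_and_lt_of_mem_Icc_inter hp hq fun h => hpq (Prod.ext rfl h)⟩

theorem isAbove_or_isRightOf_of_arc {R R' : PRect} (h : Arc R R') :
    R.IsAbove R' ∨ R.IsRightOf R' := by
  rw [Arc, not_subsingleton_iff, not_subsingleton_iff] at h
  exact h.imp isAbove_of_nontrivial_bottomSide_inter_topSide
    isRightOf_of_nontrivial_leftSide_inter_rightSide

theorem overlap_of_lt {A B : PRect} (hA : A.Proper) (hB : B.Proper)
    (hx₁ : A.x < B.x + B.w) (hx₂ : B.x < A.x + A.w)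
    (hy₁ : A.y < B.y + B.h) (hy₂ : B.y < A.y + A.h) : A.Overlap B := by
  rw [Overlap, inter, inter, prod_inter_prod, Ioo_inter_Ioo, Ioo_inter_Ioo]
  refine (nonempty_Ioo.2 ?_).prod (nonempty_Ioo.2 ?_) <;>
    simp only [lt_inf_iff, sup_lt_iff] <;>
    refine ⟨⟨?_, ?_⟩, ?_, ?_⟩ <;> linarith [hA.1, hA.2, hB.1, hB.2]

theorem horizontally_separated_of_not_overlap {A B : PRect} (hA : A.Proper) (hB : B.Proper)
    (hAB : ¬A.Overlap B) (hy₁ : A.y < B.y + B.h) (hy₂ : B.y < A.y + A.h) :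
    A.x + A.w ≤ B.x ∨ B.x + B.w ≤ A.x := by
  by_contra! h
  exact hAB (overlap_of_lt hA hB h.2 h.1 hy₁ hy₂)

end PRect

open PRect

def UpperRightFree (F : Set PRect) (B : PRect) : Prop :=
  ∀ C ∈ F, B.y + B.h ≤ C.y → C.x + C.w ≤ B.x

section Sink

variable {F : Set PRect} {B : PRect}

theorem upperRightFree_of_forall_top_le (hproper : ∀ R ∈ F, R.Proper)
    (htop : ∀ C ∈ F, C.y + C.h ≤ B.y + B.h) : UpperRightFree F B := fun C hC hle => by
  linarith [htop C hC, (hproper C hC).2]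

theorem UpperRightFree.not_isAbove (hB : UpperRightFree F B) {C : PRect} (hC : C ∈ F) :
    ¬C.IsAbove B := fun h => by
  linarith [hB C hC h.1, h.2.2]

theorem UpperRightFree.of_isRightOf (hproper : ∀ R ∈ F, R.Proper)
    (hpack : F.Pairwise fun R R' => ¬R.Overlap R') (hBF : B ∈ F) (hB : UpperRightFree F B)
    {B' : PRect} (hB'B : B'.IsRightOf B)
    (htop : ∀ C ∈ F, C.IsRightOf B → C.y + C.h ≤ B'.y + B'.h) : UpperRightFree F B' := by
  intro C hC hle
  obtain ⟨hB'x, -, hB'y⟩ := hB'B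
  have hBw := (hproper B hBF).1
  have hCh := (hproper C hC).2
  by_cases hCB : B.y + B.h ≤ C.y
  · linarith [hB C hC hCB]
  have hne : C ≠ B := by
    rintro rfl
    linarith
  rcases horizontally_separated_of_not_overlap (hproper C hC) (hproper B hBF) (hpack hC hBF hne)
    (not_le.1 hCB) (by linarith) with h | h
  · linarith
  · linarith [htop C hC ⟨h, not_le.1 hCB, by linarith⟩]

theorem exists_forall_not_isAbove_and_not_isRightOf (hfin : F.Finite) (hne : F.Nonempty)
    (hproper : ∀ R ∈ F, R.Proper) (hpack : F.Pairwise fun R R' => ¬R.Overlap R') :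
    ∃ B ∈ F, ∀ C ∈ F, ¬C.IsAbove B ∧ ¬C.IsRightOf B := by
  obtain ⟨B₀, hB₀, htop₀⟩ := F.exists_max_image (fun R => R.y + R.h) hfin hne
  obtain ⟨B, ⟨hBF, hB⟩, hmax⟩ :=
    {B ∈ F | UpperRightFree F B}.exists_max_image PRect.x (hfin.subset (sep_subset _ _))
      ⟨B₀, hB₀, upperRightFree_of_forall_top_le hproper htop₀⟩
  refine ⟨B, hBF, fun C hC => ⟨hB.not_isAbove hC, fun hCB => ?_⟩⟩
  obtain ⟨B', ⟨hB'F, hB'B⟩, htop⟩ :=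
    {C ∈ F | C.IsRightOf B}.exists_max_image (fun R => R.y + R.h) (hfin.subset (sep_subset _ _))
      ⟨C, hC, hCB⟩
  have hB' := hB.of_isRightOf hproper hpack hBF hB'B fun C hC h => htop C ⟨hC, h⟩
  linarith [hmax B' ⟨hB'F, hB'⟩, hB'B.1, (hproper B hBF).1]

end Sink

theorem no_directed_cycle_general (Q : Set PRect)
    (hproper : ∀ R ∈ Q, R.Proper)
    (hpack : ∀ R ∈ Q, ∀ R' ∈ Q, R ≠ R' → ¬ R.Overlap R') :
    ¬ ∃ (n : ℕ) (c : Fin (n + 1) → PRect),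
        Function.Injective c ∧ (∀ i, c i ∈ Q) ∧
        ∀ i : Fin (n + 1), Arc (c i) (c (i + 1)) := by
  rintro ⟨n, c, -, hmem, harc⟩
  have hsub : range c ⊆ Q := range_subset_iff.2 hmem
  obtain ⟨_, ⟨i, rfl⟩, hsink⟩ :=
    exists_forall_not_isAbove_and_not_isRightOf (finite_range c) (range_nonempty c)
      (fun R hR => hproper R (hsub hR)) (Set.Pairwise.mono hsub hpack)
  have hin := harc (i - 1)
  rw [sub_add_cancel] at hin
  rcases isAbove_or_isRightOf_of_arc hin with h | h
  exacts [(hsink _ ⟨i - 1, rfl⟩).1 h, (hsink _ ⟨i - 1, rfl⟩).2 h]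

/-- If `Q` is a finite set of pairwise non-overlapping placed rectangles, then the
directed graph on `Q` given by `Arc` has no directed cycle. -/
theorem no_directed_cycle (Q : Set PRect) (hfin : Q.Finite)
    (hproper : ∀ R ∈ Q, R.Proper)
    (hpack : ∀ R ∈ Q, ∀ R' ∈ Q, R ≠ R' → ¬ R.Overlap R') :
    ¬ ∃ (n : ℕ) (c : Fin (n + 1) → PRect),
        Function.Injective c ∧ (∀ i, c i ∈ Q) ∧
        ∀ i : Fin (n + 1), Arc (c i) (c (i + 1)) :=
  no_directed_cycle_general Q hproper hpack
end

section
/- Let B = [0,N1] × [0,N2] with N1, N2 > 0, and let Q be a nonempty packing of placed rectangles contained in B that is pushed bottom-left, meaning: for every R ∈ Q, either the left side of R lies on the line x = 0 or the left side of R intersects the right side of some other rectangle of Q in more than a single point, and either the bottom side of R lies on the line y = 0 or the bottom side of R intersects the top side of some other rectangle of Q in more than a single point. Then there exists a rectangle R ∈ Q whose bottom-left corner is (0,0), i.e., whose left side lies on the left side of B and whose bottom side lies on the bottom side of B. -/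
/-- The box `[0, N1] × [0, N2]`. -/
def box (N1 N2 : ℝ) : Set (ℝ × ℝ) := Set.Icc 0 N1 ×ˢ Set.Icc 0 N2

/-- A packing `Q` inside the box is pushed bottom-left if every rectangle's left side
lies on the line `x = 0` or touches the right side of another rectangle of `Q` in more
than one point, and its bottom side lies on `y = 0` or touches the top side of another
rectangle of `Q` in more than one point. -/
def PushedBottomLeft (Q : Set PRect) : Prop :=
  ∀ R ∈ Q,
    (R.x = 0 ∨ ∃ R' ∈ Q, R' ≠ R ∧ ¬ (R.leftSide ∩ R'.rightSide).Subsingleton) ∧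
    (R.y = 0 ∨ ∃ R' ∈ Q, R' ≠ R ∧ ¬ (R.bottomSide ∩ R'.topSide).Subsingleton)

/-- If the left side of `R` meets the right side of `R'` in more than one point, then
the right edge of `R'` is at `R.x` and `R'.y < R.y + R.h`. -/
lemma left_touch {R R' : PRect} (h : ¬ (R.leftSide ∩ R'.rightSide).Subsingleton) :
    R'.x + R'.w = R.x ∧ R'.y < R.y + R.h := by
  rw [Set.not_subsingleton_iff] at h
  obtain ⟨p, hp, q, hq, hpq⟩ := h
  simp only [PRect.leftSide, PRect.rightSide, Set.mem_inter_iff, Set.mem_prod,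
    Set.mem_singleton_iff, Set.mem_Icc] at hp hq
  obtain ⟨⟨hp1, hp2a, hp2b⟩, hp1', hp2a', hp2b'⟩ := hp
  obtain ⟨⟨hq1, hq2a, hq2b⟩, hq1', hq2a', hq2b'⟩ := hq
  have hxy : p.2 ≠ q.2 := fun h2 => hpq (Prod.ext_iff.mpr ⟨hp1.trans hq1.symm, h2⟩)
  refine ⟨hp1'.symm.trans hp1, ?_⟩
  rcases lt_or_gt_of_ne hxy with h2 | h2 <;> linarith

/-- If the bottom side of `S` meets the top side of `T` in more than one point, then
the top edge of `T` is at `S.y` and `T.x < S.x + S.w`. -/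
lemma bottom_touch {S T : PRect} (h : ¬ (S.bottomSide ∩ T.topSide).Subsingleton) :
    T.y + T.h = S.y ∧ T.x < S.x + S.w := by
  rw [Set.not_subsingleton_iff] at h
  obtain ⟨p, hp, q, hq, hpq⟩ := h
  simp only [PRect.bottomSide, PRect.topSide, Set.mem_inter_iff, Set.mem_prod,
    Set.mem_singleton_iff, Set.mem_Icc] at hp hq
  obtain ⟨⟨⟨hp1a, hp1b⟩, hp2⟩, ⟨hp1a', hp1b'⟩, hp2'⟩ := hp
  obtain ⟨⟨⟨hq1a, hq1b⟩, hq2⟩, ⟨hq1a', hq1b'⟩, hq2'⟩ := hq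
  have hxy : p.1 ≠ q.1 := fun h1 => hpq (Prod.ext_iff.mpr ⟨h1, hp2.trans hq2.symm⟩)
  refine ⟨hp2'.symm.trans hp2, ?_⟩
  rcases lt_or_gt_of_ne hxy with h1 | h1 <;> linarith

/-- In a nonempty packing inside the box `B = [0,N1] × [0,N2]` that is pushed
bottom-left, some rectangle has bottom-left corner `(0, 0)`. -/
theorem exists_bottom_left_rect (N1 N2 : ℝ) (hN1 : 0 < N1) (hN2 : 0 < N2)
    (Q : Set PRect) (hfin : Q.Finite) (hne : Q.Nonempty)
    (hproper : ∀ R ∈ Q, R.Proper)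
    (hpack : ∀ R ∈ Q, ∀ R' ∈ Q, R ≠ R' → ¬ R.Overlap R')
    (hsub : ∀ R ∈ Q, R.toSet ⊆ box N1 N2)
    (hpush : PushedBottomLeft Q) :
    ∃ R ∈ Q, R.x = 0 ∧ R.y = 0 := by
  classical
  -- bottom-left corners are in the box
  have hcorner : ∀ R ∈ Q, 0 ≤ R.x ∧ 0 ≤ R.y := by
    intro R hR
    have hP := hproper R hR
    have hm : ((R.x, R.y) : ℝ × ℝ) ∈ R.toSet := by
      simp only [PRect.toSet, Set.mem_prod, Set.mem_Icc]
      constructor <;> constructor <;> linarith [hP.1, hP.2]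
    have hb := hsub R hR hm
    simp only [box, Set.mem_prod, Set.mem_Icc] at hb
    exact ⟨hb.1.1, hb.2.1⟩
  -- a rectangle with minimal y has y = 0
  obtain ⟨R0, hR0⟩ := hne
  obtain ⟨Rm, hRmF, hRmmin⟩ := hfin.toFinset.exists_min_image (fun R => R.y)
    ⟨R0, hfin.mem_toFinset.mpr hR0⟩
  have hRmQ : Rm ∈ Q := hfin.mem_toFinset.mp hRmF
  have hRmy : Rm.y = 0 := by
    rcases (hpush Rm hRmQ).2 with h0 | ⟨T, hTQ, _, hTsub⟩
    · exact h0
    · obtain ⟨hTtop, _⟩ := bottom_touch hTsub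
      have := hRmmin T (hfin.mem_toFinset.mpr hTQ)
      have := (hproper T hTQ).2
      linarith
  -- a rectangle with y = 0 of minimal x
  obtain ⟨Rs, hRsF, hRsmin⟩ := (hfin.toFinset.filter (fun S => S.y = 0)).exists_min_image
    (fun R => R.x) ⟨Rm, Finset.mem_filter.mpr ⟨hRmF, hRmy⟩⟩
  have hRsQ : Rs ∈ Q := hfin.mem_toFinset.mp (Finset.mem_filter.mp hRsF).1
  have hRsy : Rs.y = 0 := (Finset.mem_filter.mp hRsF).2
  have hRsprop := hproper Rs hRsQ
  -- descent lemma: no rectangle lies strictly to the lower left of `Rs`'s upper-left corner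
  have descent : ∀ n : ℕ, ∀ S ∈ Q,
      (hfin.toFinset.filter (fun U => U.y < S.y)).card < n →
      S.x < Rs.x → S.y < Rs.y + Rs.h → False := by
    intro n
    induction n with
    | zero => intro S _ h; exact absurd h (Nat.not_lt_zero _)
    | succ n IH =>
      intro S hS hcard hSx hSy
      have hSprop := hproper S hS
      have hSc := hcorner S hS
      rcases eq_or_lt_of_le hSc.2 with hSy0 | hSy0
      · -- S.y = 0: contradicts minimality of Rs.x
        have := hRsmin S (Finset.mem_filter.mpr ⟨hfin.mem_toFinset.mpr hS, hSy0.symm⟩)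
        linarith
      · -- S.y > 0: follow a bottom supporter
        rcases (hpush S hS).2 with h0 | ⟨T, hTQ, _, hTsub⟩
        · linarith
        obtain ⟨hTtop, hTx⟩ := bottom_touch hTsub
        have hTprop := hproper T hTQ
        have hTc := hcorner T hTQ
        -- key: S cannot extend to the right of Rs.x (else S overlaps Rs)
        have hclaim : S.x + S.w ≤ Rs.x := by
          by_contra hcl
          push_neg at hcl
          have hSneRs : S ≠ Rs := fun h => absurd hSx (by rw [h]; exact lt_irrefl _)
          refine hpack S hS Rs hRsQ hSneRs ?_
          refine ⟨((Rs.x + min (S.x + S.w) (Rs.x + Rs.w)) / 2,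
                   (S.y + min (S.y + S.h) (Rs.y + Rs.h)) / 2), ?_, ?_⟩ <;>
          · simp only [PRect.inter, Set.mem_prod, Set.mem_Ioo]
            have h1 : Rs.x < min (S.x + S.w) (Rs.x + Rs.w) :=
              lt_min hcl (by linarith [hRsprop.1])
            have h2 : min (S.x + S.w) (Rs.x + Rs.w) ≤ S.x + S.w := min_le_left _ _
            have h3 : min (S.x + S.w) (Rs.x + Rs.w) ≤ Rs.x + Rs.w := min_le_right _ _
            have h4 : S.y < min (S.y + S.h) (Rs.y + Rs.h) :=
              lt_min (by linarith [hSprop.2]) hSy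
            have h5 : min (S.y + S.h) (Rs.y + Rs.h) ≤ S.y + S.h := min_le_left _ _
            have h6 : min (S.y + S.h) (Rs.y + Rs.h) ≤ Rs.y + Rs.h := min_le_right _ _
            constructor <;> constructor <;> linarith
        have hTy : T.y < S.y := by linarith [hTprop.2]
        have hTmem : T ∈ hfin.toFinset.filter (fun U => U.y < S.y) :=
          Finset.mem_filter.mpr ⟨hfin.mem_toFinset.mpr hTQ, hTy⟩
        have hsub' : hfin.toFinset.filter (fun U => U.y < T.y) ⊆
            hfin.toFinset.filter (fun U => U.y < S.y) := by
          intro U hU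
          simp only [Finset.mem_filter] at hU ⊢
          exact ⟨hU.1, hU.2.trans hTy⟩
        have hTnot : T ∉ hfin.toFinset.filter (fun U => U.y < T.y) := by
          simp [Finset.mem_filter]
        have hlt : (hfin.toFinset.filter (fun U => U.y < T.y)).card <
            (hfin.toFinset.filter (fun U => U.y < S.y)).card :=
          Finset.card_lt_card ((Finset.ssubset_iff_of_subset hsub').mpr ⟨T, hTmem, hTnot⟩)
        exact IH T hTQ (by omega) (lt_of_lt_of_le hTx hclaim) (by linarith)
  -- conclude: Rs.x = 0
  rcases eq_or_lt_of_le (hcorner Rs hRsQ).1 with hx0 | hx0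
  · exact ⟨Rs, hRsQ, hx0.symm, hRsy⟩
  · rcases (hpush Rs hRsQ).1 with h0 | ⟨R', hR'Q, _, hR'sub⟩
    · exact ⟨Rs, hRsQ, h0, hRsy⟩
    obtain ⟨hR'right, hR'y⟩ := left_touch hR'sub
    have hR'prop := hproper R' hR'Q
    exact absurd (descent ((hfin.toFinset.filter (fun U => U.y < R'.y)).card + 1)
      R' hR'Q (Nat.lt_succ_self _) (by linarith [hR'prop.1]) hR'y) id
end

section
/- Let B = [0,N1] × [0,N2] with N1, N2 > 0, let Q be a packing contained in B, and let G be the conflict graph of Q with special vertices s and t. Assign to each rectangle R ∈ Q the point c(R) = (x(R)+w(R)/2, y(R)+h(R)/2), to s the point (−1/2, N2/2), and to t the point (N1+1/2, N2/2). Then for every edge e = uv of G there exists a continuous injective curve γ_e : [0,1] → ℝ² with γ_e(0) = c(u) and γ_e(1) = c(v), such that any two distinct curves γ_e, γ_f intersect only in endpoints that they share (i.e., the curves are pairwise internally disjoint). In particular, the conflict graph of a packing is planar. -/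
/-- The placed rectangle `[-1, 0] × [0, N2]` associated with the left side of the box. -/
def Rleft (N2 : ℝ) : PRect := ⟨-1, 0, 1, N2⟩

/-- The placed rectangle `[N1, N1+1] × [0, N2]` associated with the right side of the box. -/
def Rright (N1 N2 : ℝ) : PRect := ⟨N1, 0, 1, N2⟩

/-- `R` sees `R'` from the left: `x(R) + w(R) ≤ x(R')` and there is a height `yy`,
strictly inside the vertical extents of both `R` and `R'`, such that the horizontal
segment `[x(R)+w(R), x(R')] × {yy}` is disjoint from every rectangle of the
packing `Q` other than `R` and `R'`. -/
def SeesDir (Q : Set PRect) (R R' : PRect) : Prop :=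
  R.x + R.w ≤ R'.x ∧ ∃ yy : ℝ,
    R.y < yy ∧ yy < R.y + R.h ∧ R'.y < yy ∧ yy < R'.y + R'.h ∧
    ∀ T ∈ Q, T ≠ R → T ≠ R' →
      ∀ xx : ℝ, R.x + R.w ≤ xx → xx ≤ R'.x → (xx, yy) ∉ T.toSet

/-- Two distinct placed rectangles see each other (in the packing `Q`). -/
def Sees (Q : Set PRect) (R R' : PRect) : Prop :=
  R ≠ R' ∧ (SeesDir Q R R' ∨ SeesDir Q R' R)

/-- Adjacency in the conflict graph of the packing `Q` inside `[0,N1] × [0,N2]`: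
the vertices are the rectangles of `Q` together with `Rleft N2` (the vertex `s`) and
`Rright N1 N2` (the vertex `t`); two vertices are adjacent iff they see each other,
except that the left and right sides are not adjacent to each other. -/
def ConflictAdj (N1 N2 : ℝ) (Q : Set PRect) (u v : PRect) : Prop :=
  u ∈ Q ∪ {Rleft N2, Rright N1 N2} ∧ v ∈ Q ∪ {Rleft N2, Rright N1 N2} ∧
  ¬ (u ∈ ({Rleft N2, Rright N1 N2} : Set PRect) ∧
     v ∈ ({Rleft N2, Rright N1 N2} : Set PRect)) ∧
  Sees Q u v

/-- The center of a placed rectangle. In particular the center of `Rleft N2` is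
`(-1/2, N2/2)` and the center of `Rright N1 N2` is `(N1 + 1/2, N2/2)`. -/
noncomputable def PRect.center (R : PRect) : ℝ × ℝ := (R.x + R.w / 2, R.y + R.h / 2)




/-- `SeesDir` with a fixed witness height. -/
def SeesDirAt (Q : Set PRect) (L R' : PRect) (yy : ℝ) : Prop :=
  L.x + L.w ≤ R'.x ∧
    L.y < yy ∧ yy < L.y + L.h ∧ R'.y < yy ∧ yy < R'.y + R'.h ∧
    ∀ T ∈ Q, T ≠ L → T ≠ R' →
      ∀ xx : ℝ, L.x + L.w ≤ xx → xx ≤ R'.x → (xx, yy) ∉ T.toSet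

lemma seesDir_iff_at (Q : Set PRect) (L R' : PRect) :
    SeesDir Q L R' ↔ ∃ yy, SeesDirAt Q L R' yy := by
  constructor
  · rintro ⟨h1, yy, h2⟩; exact ⟨yy, h1, h2⟩
  · rintro ⟨yy, h1, h2⟩; exact ⟨h1, yy, h2⟩

open Classical in
noncomputable def yyO (Q : Set PRect) (u v : PRect) : ℝ :=
  if h : SeesDir Q u v then h.2.choose else 0

lemma yyO_spec {Q : Set PRect} {u v : PRect} (h : SeesDir Q u v) :
    SeesDirAt Q u v (yyO Q u v) := by
  unfold yyO
  rw [dif_pos h]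
  exact ⟨h.1, h.2.choose_spec⟩

/-- the y-coordinate of the edge curve as a function of x -/
noncomputable def curveY (L R' : PRect) (yy : ℝ) (x : ℝ) : ℝ :=
  yy + (max (L.x + L.w/2) (min x (L.x + L.w)) - (L.x + L.w)) * (yy - (L.y + L.h/2)) / (L.w/2)
     + (min (R'.x + R'.w/2) (max x R'.x) - R'.x) * ((R'.y + R'.h/2) - yy) / (R'.w/2)

/-- the edge curve -/
noncomputable def bcurve (L R' : PRect) (yy : ℝ) (t : ℝ) : ℝ × ℝ :=
  (L.x + L.w/2 + t * ((R'.x + R'.w/2) - (L.x + L.w/2)),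
   curveY L R' yy (L.x + L.w/2 + t * ((R'.x + R'.w/2) - (L.x + L.w/2))))

section pieces
variable {L R' : PRect} {yy x : ℝ}

lemma curveY_low (hw : 0 < L.w) (hw' : 0 < R'.w) (hsep : L.x + L.w ≤ R'.x)
    (hx1 : L.x + L.w/2 ≤ x) (hx2 : x ≤ L.x + L.w) :
    curveY L R' yy x = yy + (x - (L.x + L.w)) * (yy - (L.y + L.h/2)) / (L.w/2) := by
  unfold curveY
  rw [min_eq_left hx2, max_eq_right hx1, max_eq_right (by linarith : x ≤ R'.x),
    min_eq_right (by linarith : R'.x ≤ R'.x + R'.w/2)]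
  ring

lemma curveY_mid (hw : 0 < L.w) (hw' : 0 < R'.w)
    (hx1 : L.x + L.w ≤ x) (hx2 : x ≤ R'.x) :
    curveY L R' yy x = yy := by
  unfold curveY
  rw [min_eq_right hx1, max_eq_right (by linarith : L.x + L.w/2 ≤ L.x + L.w),
    max_eq_right hx2, min_eq_right (by linarith : R'.x ≤ R'.x + R'.w/2)]
  ring

lemma curveY_high (hw : 0 < L.w) (hw' : 0 < R'.w) (hsep : L.x + L.w ≤ R'.x)
    (hx1 : R'.x ≤ x) (hx2 : x ≤ R'.x + R'.w/2) :
    curveY L R' yy x = yy + (x - R'.x) * ((R'.y + R'.h/2) - yy) / (R'.w/2) := by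
  unfold curveY
  rw [min_eq_right (by linarith : L.x + L.w ≤ x),
    max_eq_right (by linarith : L.x + L.w/2 ≤ L.x + L.w),
    max_eq_left hx1, min_eq_right hx2]
  ring

lemma curveY_left (hw : 0 < L.w) (hw' : 0 < R'.w) (hsep : L.x + L.w ≤ R'.x) :
    curveY L R' yy (L.x + L.w/2) = L.y + L.h/2 := by
  rw [curveY_low hw hw' hsep le_rfl (by linarith)]
  field_simp
  ring

lemma curveY_right (hw : 0 < L.w) (hw' : 0 < R'.w) (hsep : L.x + L.w ≤ R'.x) :
    curveY L R' yy (R'.x + R'.w/2) = R'.y + R'.h/2 := by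
  rw [curveY_high hw hw' hsep (by linarith) le_rfl]
  field_simp
  ring

lemma continuous_curveY : Continuous (curveY L R' yy) := by
  unfold curveY
  fun_prop

lemma continuous_bcurve : Continuous (bcurve L R' yy) := by
  have h1 : Continuous (fun t : ℝ => L.x + L.w/2 + t * ((R'.x + R'.w/2) - (L.x + L.w/2))) := by
    fun_prop
  exact h1.prodMk (continuous_curveY.comp h1)

end pieces

section bprops
variable {L R' : PRect} {yy : ℝ}

lemma bcurve_zero : bcurve L R' yy 0 = (L.x + L.w/2, curveY L R' yy (L.x + L.w/2)) := by
  simp [bcurve]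

lemma bcurve_one : bcurve L R' yy 1 = (R'.x + R'.w/2, curveY L R' yy (R'.x + R'.w/2)) := by
  simp [bcurve]

lemma bcurve_injOn (hlt : L.x + L.w/2 < R'.x + R'.w/2) :
    Set.InjOn (bcurve L R' yy) (Set.Icc 0 1) := by
  intro t1 _ t2 _ h
  have h1 := congrArg Prod.fst h
  simp only [bcurve] at h1
  have hd : (R'.x + R'.w/2) - (L.x + L.w/2) ≠ 0 := by linarith
  have : t1 * ((R'.x + R'.w/2) - (L.x + L.w/2)) = t2 * ((R'.x + R'.w/2) - (L.x + L.w/2)) := by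
    linarith
  exact mul_right_cancel₀ hd this

lemma mem_bcurve_iff (hlt : L.x + L.w/2 < R'.x + R'.w/2) (p : ℝ × ℝ) :
    p ∈ bcurve L R' yy '' Set.Icc 0 1 ↔
      ∃ x, (L.x + L.w/2 ≤ x ∧ x ≤ R'.x + R'.w/2) ∧ p = (x, curveY L R' yy x) := by
  constructor
  · rintro ⟨t, ⟨ht0, ht1⟩, rfl⟩
    refine ⟨L.x + L.w/2 + t * ((R'.x + R'.w/2) - (L.x + L.w/2)), ⟨?_, ?_⟩, rfl⟩
    · nlinarith
    · nlinarith
  · rintro ⟨x, ⟨hx1, hx2⟩, rfl⟩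
    refine ⟨(x - (L.x + L.w/2)) / ((R'.x + R'.w/2) - (L.x + L.w/2)), ⟨?_, ?_⟩, ?_⟩
    · apply div_nonneg <;> linarith
    · rw [div_le_one (by linarith)]; linarith
    · have hd : (R'.x + R'.w/2) - (L.x + L.w/2) ≠ 0 := by linarith
      have : L.x + L.w/2 + (x - (L.x + L.w/2)) / ((R'.x + R'.w/2) - (L.x + L.w/2)) *
        ((R'.x + R'.w/2) - (L.x + L.w/2)) = x := by
        rw [div_mul_cancel₀ _ hd]; ring
      simp only [bcurve, this]

/-- image of the reversed curve -/
lemma rev_image (f : ℝ → ℝ × ℝ) :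
    (fun t => f (1 - t)) '' Set.Icc 0 1 = f '' Set.Icc 0 1 := by
  have : (fun t : ℝ => f (1 - t)) = f ∘ (fun t : ℝ => 1 - t) := rfl
  rw [this, Set.image_comp, Set.image_const_sub_Icc]
  norm_num

end bprops

/-- linear interpolation stays strictly inside an interval -/
lemma interp_mem {lo hi v1 v2 c s : ℝ} (h1 : lo < v1) (h2 : v1 < hi) (h3 : lo < v2)
    (h4 : v2 < hi) (hc : 0 < c) (hs1 : -c ≤ s) (hs2 : s ≤ 0) :
    lo < v1 + s * (v1 - v2) / c ∧ v1 + s * (v1 - v2) / c < hi := by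
  have hrw : v1 + s * (v1 - v2) / c = (v1 * c + s * (v1 - v2)) / c := by
    field_simp
  rw [hrw, lt_div_iff₀ hc, div_lt_iff₀ hc]
  constructor
  · rcases le_total v1 v2 with h | h
    · nlinarith [mul_nonneg (by linarith : (0:ℝ) ≤ -s) (by linarith : (0:ℝ) ≤ v2 - v1)]
    · nlinarith [mul_le_mul_of_nonneg_right hs1 (by linarith : (0:ℝ) ≤ v1 - v2)]
  · rcases le_total v1 v2 with h | h
    · nlinarith [mul_le_mul_of_nonneg_right hs1 (by linarith : (0:ℝ) ≤ v2 - v1),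
        mul_nonneg (by linarith : (0:ℝ) ≤ -s) (by linarith : (0:ℝ) ≤ v2 - v1)]
    · nlinarith [mul_nonneg (by linarith : (0:ℝ) ≤ -s) (by linarith : (0:ℝ) ≤ v1 - v2)]

section Vfacts

variable {N1 N2 : ℝ} {Q : Set PRect}

lemma mem_toSet_iff {T : PRect} {p : ℝ × ℝ} :
    p ∈ T.toSet ↔ (T.x ≤ p.1 ∧ p.1 ≤ T.x + T.w) ∧ (T.y ≤ p.2 ∧ p.2 ≤ T.y + T.h) := by
  simp [PRect.toSet, Set.mem_prod, Set.mem_Icc, Prod.le_def]; tauto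

lemma mem_inter_iff {T : PRect} {p : ℝ × ℝ} :
    p ∈ T.inter ↔ (T.x < p.1 ∧ p.1 < T.x + T.w) ∧ (T.y < p.2 ∧ p.2 < T.y + T.h) := by
  simp [PRect.inter, Set.mem_prod, Set.mem_Ioo]

lemma mem_toSet_mk {T : PRect} {a b : ℝ} :
    (a, b) ∈ T.toSet ↔ (T.x ≤ a ∧ a ≤ T.x + T.w) ∧ (T.y ≤ b ∧ b ≤ T.y + T.h) := mem_toSet_iff

lemma mem_inter_mk {T : PRect} {a b : ℝ} :
    (a, b) ∈ T.inter ↔ (T.x < a ∧ a < T.x + T.w) ∧ (T.y < b ∧ b < T.y + T.h) := mem_inter_iff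

lemma inter_subset_toSet {T : PRect} : T.inter ⊆ T.toSet := by
  intro p hp
  rw [mem_inter_iff] at hp
  rw [mem_toSet_iff]
  exact ⟨⟨hp.1.1.le, hp.1.2.le⟩, hp.2.1.le, hp.2.2.le⟩

lemma qx_bounds (hproper : ∀ R ∈ Q, R.Proper) (hsub : ∀ R ∈ Q, R.toSet ⊆ box N1 N2) :
    ∀ T ∈ Q, 0 ≤ T.x ∧ T.x + T.w ≤ N1 := by
  intro T hT
  obtain ⟨hw, hh⟩ := hproper T hT
  have h1 : (T.x, T.y) ∈ T.toSet := by
    rw [mem_toSet_iff]; constructor <;> constructor <;> simp <;> linarith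
  have h2 : (T.x + T.w, T.y) ∈ T.toSet := by
    rw [mem_toSet_iff]; constructor <;> constructor <;> simp <;> linarith
  have b1 := hsub T hT h1
  have b2 := hsub T hT h2
  simp only [box, Set.mem_prod, Set.mem_Icc] at b1 b2
  exact ⟨b1.1.1, b2.1.2⟩

lemma properV (hN2 : 0 < N2) (hproper : ∀ R ∈ Q, R.Proper) :
    ∀ T ∈ Q ∪ {Rleft N2, Rright N1 N2}, T.Proper := by
  intro T hT
  rcases hT with hTQ | hTs
  · exact hproper T hTQ
  · rcases hTs with rfl | rfl
    · exact ⟨one_pos, hN2⟩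
    · exact ⟨one_pos, hN2⟩

lemma interdisj (hN1 : 0 < N1)
    (hpack : ∀ R ∈ Q, ∀ R' ∈ Q, R ≠ R' → ¬ R.Overlap R')
    (hQx : ∀ T ∈ Q, 0 ≤ T.x ∧ T.x + T.w ≤ N1) :
    ∀ T ∈ Q ∪ {Rleft N2, Rright N1 N2}, ∀ T' ∈ Q ∪ {Rleft N2, Rright N1 N2},
      T ≠ T' → ∀ p : ℝ × ℝ, p ∈ T.inter → p ∈ T'.inter → False := by
  intro T hT T' hT' hne p hp hp'
  rw [mem_inter_iff] at hp hp'
  rcases hT with hTQ | hTs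
  · rcases hT' with hT'Q | hT's
    · exact hpack T hTQ T' hT'Q hne ⟨p, mem_inter_iff.2 hp, mem_inter_iff.2 hp'⟩
    · obtain ⟨hx1, hx2⟩ := hQx T hTQ
      rcases hT's with rfl | rfl
      · simp only [Rleft] at hp'; linarith [hp.1.1, hp'.1.2]
      · simp only [Rright] at hp'; linarith [hp.1.2, hp'.1.1]
  · rcases hT' with hT'Q | hT's
    · obtain ⟨hx1, hx2⟩ := hQx T' hT'Q
      rcases hTs with rfl | rfl
      · simp only [Rleft] at hp; linarith [hp'.1.1, hp.1.2]
      · simp only [Rright] at hp; linarith [hp'.1.2, hp.1.1]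
    · rcases hTs with rfl | rfl <;> rcases hT's with rfl | rfl
      · exact hne rfl
      · simp only [Rleft, Rright] at hp hp'; linarith [hp.1.2, hp'.1.1]
      · simp only [Rleft, Rright] at hp hp'; linarith [hp.1.1, hp'.1.2]
      · exact hne rfl

lemma free_avoid (hN1 : 0 < N1) (hproper : ∀ R ∈ Q, R.Proper)
    (hQx : ∀ T ∈ Q, 0 ≤ T.x ∧ T.x + T.w ≤ N1)
    {L2 R2 : PRect} {yy2 : ℝ}
    (hL2V : L2 ∈ Q ∪ {Rleft N2, Rright N1 N2}) (hR2V : R2 ∈ Q ∪ {Rleft N2, Rright N1 N2})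
    (h2 : SeesDirAt Q L2 R2 yy2)
    {T : PRect} (hTV : T ∈ Q ∪ {Rleft N2, Rright N1 N2}) (hT1 : T ≠ L2) (hT2 : T ≠ R2)
    {xx : ℝ} (hxx1 : L2.x + L2.w ≤ xx) (hxx2 : xx ≤ R2.x) :
    (xx, yy2) ∉ T.toSet := by
  rcases hTV with hTQ | hTs
  · exact h2.2.2.2.2.2 T hTQ hT1 hT2 xx hxx1 hxx2
  · intro hmem
    rw [mem_toSet_iff] at hmem
    rcases hTs with rfl | rfl
    · -- T = Rleft : xx ≤ 0
      have hxx0 : xx ≤ 0 := by simpa [Rleft] using hmem.1.2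
      rcases hL2V with hQ | hs
      · obtain ⟨h1, _⟩ := hQx L2 hQ
        obtain ⟨hw, _⟩ := hproper L2 hQ
        linarith
      · rcases hs with rfl | rfl
        · exact hT1 rfl
        · simp only [Rright] at hxx1; linarith
    · -- T = Rright : N1 ≤ xx
      have hxxN : N1 ≤ xx := by simpa [Rright] using hmem.1.1
      rcases hR2V with hQ | hs
      · obtain ⟨_, h1⟩ := hQx R2 hQ
        obtain ⟨hw, _⟩ := hproper R2 hQ
        linarith
      · rcases hs with rfl | rfl
        · simp only [Rleft] at hxx2; linarith
        · exact hT2 rfl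

/-- left ends of directed edges are not `Rright`, right ends not `Rleft`. -/
lemma left_end_cases (hN1 : 0 < N1) (hproper : ∀ R ∈ Q, R.Proper)
    (hQx : ∀ T ∈ Q, 0 ≤ T.x ∧ T.x + T.w ≤ N1)
    {L R' : PRect} {yy : ℝ}
    (hLV : L ∈ Q ∪ {Rleft N2, Rright N1 N2}) (hRV : R' ∈ Q ∪ {Rleft N2, Rright N1 N2})
    (h1 : SeesDirAt Q L R' yy) :
    (L ∈ Q ∨ L = Rleft N2) ∧ (R' ∈ Q ∨ R' = Rright N1 N2) := by
  have hsep := h1.1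
  have hRx : R'.x ≤ N1 := by
    rcases hRV with hQ | hs
    · obtain ⟨_, h⟩ := hQx R' hQ
      obtain ⟨hw, _⟩ := hproper R' hQ
      linarith
    · rcases hs with rfl | rfl
      · simp [Rleft]; linarith
      · simp [Rright]
  have hLx : 0 ≤ L.x + L.w := by
    rcases hLV with hQ | hs
    · obtain ⟨h, _⟩ := hQx L hQ
      obtain ⟨hw, _⟩ := hproper L hQ
      linarith
    · rcases hs with rfl | rfl
      · simp [Rleft]
      · simp [Rright]; linarith
  constructor
  · rcases hLV with hQ | hs
    · exact Or.inl hQ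
    · rcases hs with rfl | rfl
      · exact Or.inr rfl
      · exfalso; simp only [Rright] at hsep; linarith
  · rcases hRV with hQ | hs
    · exact Or.inl hQ
    · rcases hs with rfl | rfl
      · exfalso; simp only [Rleft] at hsep; linarith
      · exact Or.inr rfl

/-- two edges out of the same left rectangle cannot use the same height. -/
lemma same_left_height (hN1 : 0 < N1) (hN2 : 0 < N2) (hproper : ∀ R ∈ Q, R.Proper)
    (hQx : ∀ T ∈ Q, 0 ≤ T.x ∧ T.x + T.w ≤ N1)
    {L R' R2 : PRect} {yy : ℝ}
    (hLV : L ∈ Q ∪ {Rleft N2, Rright N1 N2}) (hRV : R' ∈ Q ∪ {Rleft N2, Rright N1 N2})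
    (hR2V : R2 ∈ Q ∪ {Rleft N2, Rright N1 N2})
    (h1 : SeesDirAt Q L R' yy) (h2 : SeesDirAt Q L R2 yy) (hne : R' ≠ R2) : False := by
  have hPL := properV hN2 hproper L hLV
  have hPR := properV hN2 hproper R' hRV
  have hPR2 := properV hN2 hproper R2 hR2V
  have hLR : L ≠ R' := by
    intro h; rw [h] at h1; have := h1.1; linarith [hPR.1]
  have hLR2 : L ≠ R2 := by
    intro h; rw [h] at h2; have := h2.1; linarith [hPR2.1]
  have hc1 := (left_end_cases hN1 hproper hQx hLV hRV h1).2
  have hc2 := (left_end_cases hN1 hproper hQx hLV hR2V h2).2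
  have hmem1 : (R'.x, yy) ∈ R'.toSet := by
    rw [mem_toSet_mk]
    exact ⟨⟨le_rfl, by linarith [hPR.1]⟩, h1.2.2.2.1.le, h1.2.2.2.2.1.le⟩
  have hmem2 : (R2.x, yy) ∈ R2.toSet := by
    rw [mem_toSet_mk]
    exact ⟨⟨le_rfl, by linarith [hPR2.1]⟩, h2.2.2.2.1.le, h2.2.2.2.2.1.le⟩
  rcases hc1 with hQ1 | rfl
  · rcases hc2 with hQ2 | rfl
    · rcases le_total R'.x R2.x with hle | hle
      · exact h2.2.2.2.2.2 R' hQ1 (Ne.symm hLR) hne R'.x h1.1 hle hmem1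
      · exact h1.2.2.2.2.2 R2 hQ2 (Ne.symm hLR2) (Ne.symm hne) R2.x h2.1 hle hmem2
    · -- R2 = Rright, R' ∈ Q, so R'.x ≤ N1 = R2.x
      obtain ⟨_, hb⟩ := hQx R' hQ1
      have : R'.x ≤ (Rright N1 N2).x := by simp [Rright]; linarith [hPR.1]
      exact h2.2.2.2.2.2 R' hQ1 (Ne.symm hLR) hne R'.x h1.1 this hmem1
  · rcases hc2 with hQ2 | rfl
    · obtain ⟨_, hb⟩ := hQx R2 hQ2
      have : R2.x ≤ (Rright N1 N2).x := by simp [Rright]; linarith [hPR2.1]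
      exact h1.2.2.2.2.2 R2 hQ2 (Ne.symm hLR2) (Ne.symm hne) R2.x h2.1 this hmem2
    · exact hne rfl

/-- two edges into the same right rectangle cannot use the same height. -/
lemma same_right_height (hN1 : 0 < N1) (hN2 : 0 < N2) (hproper : ∀ R ∈ Q, R.Proper)
    (hQx : ∀ T ∈ Q, 0 ≤ T.x ∧ T.x + T.w ≤ N1)
    {L L2 R' : PRect} {yy : ℝ}
    (hLV : L ∈ Q ∪ {Rleft N2, Rright N1 N2}) (hL2V : L2 ∈ Q ∪ {Rleft N2, Rright N1 N2})
    (hRV : R' ∈ Q ∪ {Rleft N2, Rright N1 N2})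
    (h1 : SeesDirAt Q L R' yy) (h2 : SeesDirAt Q L2 R' yy) (hne : L ≠ L2) : False := by
  have hPL := properV hN2 hproper L hLV
  have hPL2 := properV hN2 hproper L2 hL2V
  have hPR := properV hN2 hproper R' hRV
  have hLR : L ≠ R' := by
    intro h; rw [h] at h1; have := h1.1; linarith [hPR.1]
  have hL2R : L2 ≠ R' := by
    intro h; rw [h] at h2; have := h2.1; linarith [hPR.1]
  have hc1 := (left_end_cases hN1 hproper hQx hLV hRV h1).1
  have hc2 := (left_end_cases hN1 hproper hQx hL2V hRV h2).1
  have hmem1 : (L.x + L.w, yy) ∈ L.toSet := by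
    rw [mem_toSet_mk]
    exact ⟨⟨by linarith [hPL.1], le_rfl⟩, h1.2.1.le, h1.2.2.1.le⟩
  have hmem2 : (L2.x + L2.w, yy) ∈ L2.toSet := by
    rw [mem_toSet_mk]
    exact ⟨⟨by linarith [hPL2.1], le_rfl⟩, h2.2.1.le, h2.2.2.1.le⟩
  rcases hc1 with hQ1 | rfl
  · rcases hc2 with hQ2 | rfl
    · rcases le_total (L.x + L.w) (L2.x + L2.w) with hle | hle
      · exact h1.2.2.2.2.2 L2 hQ2 (Ne.symm hne) hL2R (L2.x + L2.w) hle h2.1 hmem2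
      · exact h2.2.2.2.2.2 L hQ1 hne hLR (L.x + L.w) hle h1.1 hmem1
    · -- L2 = Rleft : L2.x + L2.w = 0 ≤ L.x + L.w
      obtain ⟨hb, _⟩ := hQx L hQ1
      have : (Rleft N2).x + (Rleft N2).w ≤ L.x + L.w := by simp [Rleft]; linarith [hPL.1]
      exact h2.2.2.2.2.2 L hQ1 hne hLR (L.x + L.w) this h1.1 hmem1
  · rcases hc2 with hQ2 | rfl
    · obtain ⟨hb, _⟩ := hQx L2 hQ2
      have : (Rleft N2).x + (Rleft N2).w ≤ L2.x + L2.w := by simp [Rleft]; linarith [hPL2.1]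
      exact h1.2.2.2.2.2 L2 hQ2 (Ne.symm hne) hL2R (L2.x + L2.w) this h2.1 hmem2
    · exact hne rfl

end Vfacts

section keylem

variable {N1 N2 : ℝ} {Q : Set PRect}

lemma piece_low {L R' : PRect} {yy x : ℝ} (h1 : SeesDirAt Q L R' yy)
    (hPL : L.Proper) (hPR : R'.Proper)
    (hx1 : L.x + L.w/2 ≤ x) (hx2 : x < L.x + L.w) :
    (x, curveY L R' yy x) ∈ L.inter := by
  rw [mem_inter_mk, curveY_low hPL.1 hPR.1 h1.1 hx1 hx2.le]
  refine ⟨⟨by linarith [hPL.1], hx2⟩, ?_⟩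
  exact interp_mem h1.2.1 h1.2.2.1 (by linarith [hPL.2]) (by linarith [hPL.2])
    (by linarith [hPL.1]) (by linarith) (by linarith)

lemma piece_high {L R' : PRect} {yy x : ℝ} (h1 : SeesDirAt Q L R' yy)
    (hPL : L.Proper) (hPR : R'.Proper)
    (hx1 : R'.x < x) (hx2 : x ≤ R'.x + R'.w/2) :
    (x, curveY L R' yy x) ∈ R'.inter := by
  rw [mem_inter_mk, curveY_high hPL.1 hPR.1 h1.1 hx1.le hx2]
  refine ⟨⟨hx1, by linarith [hPR.1]⟩, ?_⟩
  have hE : yy + (x - R'.x) * ((R'.y + R'.h/2) - yy) / (R'.w/2)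
      = yy + (R'.x - x) * (yy - (R'.y + R'.h/2)) / (R'.w/2) := by ring
  rw [hE]
  exact interp_mem h1.2.2.2.1 h1.2.2.2.2.1 (by linarith [hPR.2]) (by linarith [hPR.2])
    (by linarith [hPR.1]) (by linarith) (by linarith)

lemma key (hN1 : 0 < N1) (hN2 : 0 < N2) (hproper : ∀ R ∈ Q, R.Proper)
    (hpack : ∀ R ∈ Q, ∀ R' ∈ Q, R ≠ R' → ¬ R.Overlap R')
    (hQx : ∀ T ∈ Q, 0 ≤ T.x ∧ T.x + T.w ≤ N1)
    {L R' L2 R2 : PRect}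
    (hLV : L ∈ Q ∪ {Rleft N2, Rright N1 N2}) (hRV : R' ∈ Q ∪ {Rleft N2, Rright N1 N2})
    (hL2V : L2 ∈ Q ∪ {Rleft N2, Rright N1 N2}) (hR2V : R2 ∈ Q ∪ {Rleft N2, Rright N1 N2})
    {yy yy2 x : ℝ}
    (h1 : SeesDirAt Q L R' yy) (h2 : SeesDirAt Q L2 R2 yy2)
    (hpair : ({L, R'} : Set PRect) ≠ {L2, R2})
    (hx1 : L.x + L.w/2 ≤ x) (hx2 : x ≤ R'.x + R'.w/2)
    (hx3 : L2.x + L2.w/2 ≤ x) (hx4 : x ≤ R2.x + R2.w/2)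
    (heq : curveY L R' yy x = curveY L2 R2 yy2 x) :
    (x, curveY L R' yy x) ∈
      (({L.center, R'.center} : Set (ℝ × ℝ)) ∩ {L2.center, R2.center}) := by
  have hPL := properV hN2 hproper L hLV
  have hPR := properV hN2 hproper R' hRV
  have hPL2 := properV hN2 hproper L2 hL2V
  have hPR2 := properV hN2 hproper R2 hR2V
  have hID := interdisj (N2 := N2) hN1 hpack hQx
  have hpairs : ¬(L = L2 ∧ R' = R2) := by
    rintro ⟨rfl, rfl⟩; exact hpair rfl
  simp only [Set.mem_inter_iff, Set.mem_insert_iff, Set.mem_singleton_iff]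
  rcases lt_or_ge x (L.x + L.w) with ha | ha
  · -- e in left star (inside L)
    have hp1 : (x, curveY L R' yy x) ∈ L.inter := piece_low h1 hPL hPR hx1 ha
    rcases lt_or_ge x (L2.x + L2.w) with ha2 | ha2
    · -- e' in left star (inside L2)
      have hp2 : (x, curveY L R' yy x) ∈ L2.inter := by
        rw [heq]; exact piece_low h2 hPL2 hPR2 hx3 ha2
      have hLL2 : L = L2 := by
        by_contra hne; exact hID L hLV L2 hL2V hne _ hp1 hp2
      subst hLL2
      have hrw1 := curveY_low hPL.1 hPR.1 h1.1 hx1 ha.le (yy := yy)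
      have hrw2 := curveY_low hPL.1 hPR2.1 h2.1 hx1 ha.le (yy := yy2)
      have hfac : (yy - yy2) * (x - (L.x + L.w/2)) = 0 := by
        have hne0 : L.w/2 ≠ 0 := by have := hPL.1; positivity
        have hw0 : L.w ≠ 0 := ne_of_gt hPL.1
        have hz : (yy - yy2) * (x - (L.x + L.w/2)) / (L.w/2) = 0 := by
          rw [show (yy - yy2) * (x - (L.x + L.w/2)) / (L.w/2)
            = (yy + (x - (L.x + L.w)) * (yy - (L.y + L.h/2)) / (L.w/2))
              - (yy2 + (x - (L.x + L.w)) * (yy2 - (L.y + L.h/2)) / (L.w/2)) by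
              field_simp
              ring]
          rw [← hrw1, ← hrw2, heq]; ring
        rcases div_eq_zero_iff.1 hz with h | h
        · exact h
        · exact absurd h hne0
      rcases mul_eq_zero.1 hfac with hy0 | hx0
      · exfalso
        have hyy : yy = yy2 := by linarith [sub_eq_zero.1 hy0]
        rw [hyy] at h1
        have hRR2 : R' ≠ R2 := by
          intro h; exact hpairs ⟨rfl, h⟩
        exact same_left_height hN1 hN2 hproper hQx hLV hRV hR2V h1 h2 hRR2
      · have hxc : x = L.x + L.w/2 := by linarith [sub_eq_zero.1 hx0]
        have hpc : (x, curveY L R' yy x) = L.center := by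
          rw [hxc, curveY_left hPL.1 hPR.1 h1.1]; rfl
        exact ⟨Or.inl hpc, Or.inl hpc⟩
    rcases le_or_gt x R2.x with hb2 | hb2
    · -- e' in free part
      exfalso
      have hyv : curveY L R' yy x = yy2 := by
        rw [heq]; exact curveY_mid hPL2.1 hPR2.1 ha2 hb2
      have hmem : (x, yy2) ∈ L.toSet := by
        rw [← hyv]; exact inter_subset_toSet hp1
      by_cases hc1 : L = L2
      · subst hc1; linarith
      by_cases hc2 : L = R2
      · subst hc2; linarith [hPL.1]
      · exact free_avoid hN1 hproper hQx hL2V hR2V h2 hLV hc1 hc2 ha2 hb2 hmem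
    · -- e' in right star (inside R2)
      have hp2 : (x, curveY L R' yy x) ∈ R2.inter := by
        rw [heq]; exact piece_high h2 hPL2 hPR2 hb2 hx4
      have hLR2 : L = R2 := by
        by_contra hne; exact hID L hLV R2 hR2V hne _ hp1 hp2
      have hxc : x = L.x + L.w/2 := by
        apply le_antisymm _ hx1
        rw [hLR2]; exact hx4
      have hpc : (x, curveY L R' yy x) = L.center := by
        rw [hxc, curveY_left hPL.1 hPR.1 h1.1]; rfl
      refine ⟨Or.inl hpc, Or.inr ?_⟩
      rw [hpc, hLR2]
  rcases le_or_gt x R'.x with hb | hb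
  · -- e in free part
    have hyv : curveY L R' yy x = yy := curveY_mid hPL.1 hPR.1 ha hb
    rcases lt_or_ge x (L2.x + L2.w) with ha2 | ha2
    · -- e' in left star (inside L2)
      exfalso
      have hp2 : (x, yy) ∈ L2.inter := by
        rw [← hyv, heq]; exact piece_low h2 hPL2 hPR2 hx3 ha2
      have hmem : (x, yy) ∈ L2.toSet := inter_subset_toSet hp2
      by_cases hc1 : L2 = L
      · subst hc1; linarith
      by_cases hc2 : L2 = R'
      · subst hc2; linarith [hPR.1]
      · exact free_avoid hN1 hproper hQx hLV hRV h1 hL2V hc1 hc2 ha hb hmem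
    rcases le_or_gt x R2.x with hb2 | hb2
    · -- both free
      exfalso
      have hyy : yy = yy2 := by
        rw [← hyv, heq]; exact curveY_mid hPL2.1 hPR2.1 ha2 hb2
      rcases le_total (L.x + L.w) (L2.x + L2.w) with hle | hle
      · -- (L2.x+L2.w, yy) on e's free segment
        by_cases hc1 : L2 = L
        · subst hc1
          have hRR2 : R' ≠ R2 := fun h => hpairs ⟨rfl, h⟩
          rw [hyy] at h1
          exact same_left_height hN1 hN2 hproper hQx hLV hRV hR2V h1 h2 hRR2
        by_cases hc2 : L2 = R'
        · subst hc2; linarith [hPR.1]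
        · have hmem : ((L2.x + L2.w), yy) ∈ L2.toSet := by
            rw [mem_toSet_mk, hyy]
            exact ⟨⟨by linarith [hPL2.1], le_rfl⟩, h2.2.1.le, h2.2.2.1.le⟩
          exact free_avoid hN1 hproper hQx hLV hRV h1 hL2V hc1 hc2 hle
            (by linarith) hmem
      · -- (L.x+L.w, yy) on e''s free segment
        by_cases hc1 : L = L2
        · subst hc1
          have hRR2 : R' ≠ R2 := fun h => hpairs ⟨rfl, h⟩
          rw [hyy] at h1
          exact same_left_height hN1 hN2 hproper hQx hLV hRV hR2V h1 h2 hRR2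
        by_cases hc2 : L = R2
        · subst hc2; linarith [hPL.1]
        · have hmem : ((L.x + L.w), yy2) ∈ L.toSet := by
            rw [mem_toSet_mk, ← hyy]
            exact ⟨⟨by linarith [hPL.1], le_rfl⟩, h1.2.1.le, h1.2.2.1.le⟩
          exact free_avoid hN1 hproper hQx hL2V hR2V h2 hLV hc1 hc2 hle
            (by linarith) hmem
    · -- e' in right star (inside R2)
      exfalso
      have hp2 : (x, yy) ∈ R2.inter := by
        rw [← hyv, heq]; exact piece_high h2 hPL2 hPR2 hb2 hx4
      have hmem : (x, yy) ∈ R2.toSet := inter_subset_toSet hp2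
      by_cases hc1 : R2 = L
      · subst hc1; linarith [hPL.1]
      by_cases hc2 : R2 = R'
      · subst hc2; linarith
      · exact free_avoid hN1 hproper hQx hLV hRV h1 hR2V hc1 hc2 ha hb hmem
  · -- e in right star (inside R')
    have hp1 : (x, curveY L R' yy x) ∈ R'.inter := piece_high h1 hPL hPR hb hx2
    rcases lt_or_ge x (L2.x + L2.w) with ha2 | ha2
    · -- e' in left star (inside L2)
      have hp2 : (x, curveY L R' yy x) ∈ L2.inter := by
        rw [heq]; exact piece_low h2 hPL2 hPR2 hx3 ha2
      have hRL2 : R' = L2 := by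
        by_contra hne; exact hID R' hRV L2 hL2V hne _ hp1 hp2
      have hxc : x = R'.x + R'.w/2 := by
        apply le_antisymm hx2
        rw [hRL2]; exact hx3
      have hpc : (x, curveY L R' yy x) = R'.center := by
        rw [hxc, curveY_right hPL.1 hPR.1 h1.1]; rfl
      refine ⟨Or.inr hpc, Or.inl ?_⟩
      rw [hpc, hRL2]
    rcases le_or_gt x R2.x with hb2 | hb2
    · -- e' in free part
      exfalso
      have hyv : curveY L R' yy x = yy2 := by
        rw [heq]; exact curveY_mid hPL2.1 hPR2.1 ha2 hb2
      have hmem : (x, yy2) ∈ R'.toSet := by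
        rw [← hyv]; exact inter_subset_toSet hp1
      by_cases hc1 : R' = L2
      · subst hc1; linarith [hPR.1]
      by_cases hc2 : R' = R2
      · subst hc2; linarith
      · exact free_avoid hN1 hproper hQx hL2V hR2V h2 hRV hc1 hc2 ha2 hb2 hmem
    · -- e' in right star (inside R2)
      have hp2 : (x, curveY L R' yy x) ∈ R2.inter := by
        rw [heq]; exact piece_high h2 hPL2 hPR2 hb2 hx4
      have hRR2 : R' = R2 := by
        by_contra hne; exact hID R' hRV R2 hR2V hne _ hp1 hp2
      subst hRR2
      have hrw1 := curveY_high hPL.1 hPR.1 h1.1 hb.le hx2 (yy := yy)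
      have hrw2 := curveY_high hPL2.1 hPR.1 h2.1 hb.le hx2 (yy := yy2)
      have hfac : (yy - yy2) * ((R'.x + R'.w/2) - x) = 0 := by
        have hne0 : R'.w/2 ≠ 0 := by have := hPR.1; positivity
        have hw0 : R'.w ≠ 0 := ne_of_gt hPR.1
        have hz : (yy - yy2) * ((R'.x + R'.w/2) - x) / (R'.w/2) = 0 := by
          rw [show (yy - yy2) * ((R'.x + R'.w/2) - x) / (R'.w/2)
            = (yy + (x - R'.x) * ((R'.y + R'.h/2) - yy) / (R'.w/2))
              - (yy2 + (x - R'.x) * ((R'.y + R'.h/2) - yy2) / (R'.w/2)) by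
              field_simp
              ring]
          rw [← hrw1, ← hrw2, heq]; ring
        rcases div_eq_zero_iff.1 hz with h | h
        · exact h
        · exact absurd h hne0
      rcases mul_eq_zero.1 hfac with hy0 | hx0
      · exfalso
        have hyy : yy = yy2 := by linarith [sub_eq_zero.1 hy0]
        rw [hyy] at h1
        have hLL2 : L ≠ L2 := by
          intro h; exact hpairs ⟨h, rfl⟩
        exact same_right_height hN1 hN2 hproper hQx hLV hL2V hRV h1 h2 hLL2
      · have hxc : x = R'.x + R'.w/2 := by linarith [sub_eq_zero.1 hx0]
        have hpc : (x, curveY L R' yy x) = R'.center := by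
          rw [hxc, curveY_right hPL.1 hPR.1 h1.1]; rfl
        exact ⟨Or.inr hpc, Or.inr hpc⟩

end keylem

open Classical in
noncomputable def gcurve (Q : Set PRect) (u v : PRect) : ℝ → ℝ × ℝ :=
  if SeesDir Q u v then bcurve u v (yyO Q u v) else fun t => bcurve v u (yyO Q v u) (1 - t)

lemma sep_lt {N1 N2 : ℝ} {Q : Set PRect} (hN2 : 0 < N2) (hproper : ∀ R ∈ Q, R.Proper)
    {u v : PRect} (hu : u ∈ Q ∪ {Rleft N2, Rright N1 N2})
    (hv : v ∈ Q ∪ {Rleft N2, Rright N1 N2}) (hsep : u.x + u.w ≤ v.x) :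
    u.x + u.w/2 < v.x + v.w/2 := by
  have h1 := properV hN2 hproper u hu
  have h2 := properV hN2 hproper v hv
  linarith [h1.1, h2.1]

lemma gcurve_norm {N1 N2 : ℝ} {Q : Set PRect} (hN2 : 0 < N2)
    (hproper : ∀ R ∈ Q, R.Proper) {u v : PRect} (hadj : ConflictAdj N1 N2 Q u v) :
    ∃ L R', L ∈ Q ∪ {Rleft N2, Rright N1 N2} ∧ R' ∈ Q ∪ {Rleft N2, Rright N1 N2} ∧
      SeesDirAt Q L R' (yyO Q L R') ∧
      ({L, R'} : Set PRect) = {u, v} ∧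
      (({L.center, R'.center} : Set (ℝ × ℝ)) = {u.center, v.center}) ∧
      gcurve Q u v '' Set.Icc 0 1 = bcurve L R' (yyO Q L R') '' Set.Icc 0 1 ∧
      L.x + L.w/2 < R'.x + R'.w/2 := by
  obtain ⟨hu, hv, hnb, hne, hor⟩ := hadj
  by_cases h : SeesDir Q u v
  · refine ⟨u, v, hu, hv, yyO_spec h, rfl, rfl, ?_, ?_⟩
    · rw [gcurve, if_pos h]
    · exact sep_lt hN2 hproper hu hv h.1
  · have h' : SeesDir Q v u := hor.resolve_left h
    refine ⟨v, u, hv, hu, yyO_spec h', Set.pair_comm v u, Set.pair_comm v.center u.center,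
      ?_, ?_⟩
    · rw [gcurve, if_neg h]
      exact rev_image _
    · exact sep_lt hN2 hproper hv hu h'.1


/-- Planarity of the conflict graph: one can draw each edge of the conflict graph as a
continuous injective curve between the centers of its endpoints so that distinct
curves meet only in endpoints that they share. -/
theorem conflict_graph_planar (N1 N2 : ℝ) (hN1 : 0 < N1) (hN2 : 0 < N2)
    (Q : Set PRect) (hfin : Q.Finite)
    (hproper : ∀ R ∈ Q, R.Proper)
    (hpack : ∀ R ∈ Q, ∀ R' ∈ Q, R ≠ R' → ¬ R.Overlap R')
    (hsub : ∀ R ∈ Q, R.toSet ⊆ box N1 N2) :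
    ∃ γ : PRect → PRect → (ℝ → ℝ × ℝ),
      ∀ u v, ConflictAdj N1 N2 Q u v →
        (ContinuousOn (γ u v) (Set.Icc 0 1) ∧
         Set.InjOn (γ u v) (Set.Icc 0 1) ∧
         γ u v 0 = u.center ∧ γ u v 1 = v.center) ∧
        (∀ u' v', ConflictAdj N1 N2 Q u' v' →
          ({u, v} : Set PRect) ≠ ({u', v'} : Set PRect) →
          (γ u v '' Set.Icc 0 1) ∩ (γ u' v' '' Set.Icc 0 1) ⊆
            ({u.center, v.center} ∩ {u'.center, v'.center} : Set (ℝ × ℝ))) := by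
  have hQx := qx_bounds hproper hsub
  refine ⟨gcurve Q, fun u v hadj => ⟨?_, ?_⟩⟩
  · -- individual curve properties
    obtain ⟨hu, hv, hnb, hne, hor⟩ := hadj
    by_cases h : SeesDir Q u v
    · have hs := yyO_spec h
      have hPu := properV hN2 hproper u hu
      have hPv := properV hN2 hproper v hv
      have hlt := sep_lt hN2 hproper hu hv h.1
      rw [gcurve, if_pos h]
      refine ⟨continuous_bcurve.continuousOn, bcurve_injOn hlt, ?_, ?_⟩
      · rw [bcurve_zero, curveY_left hPu.1 hPv.1 hs.1]; rfl
      · rw [bcurve_one, curveY_right hPu.1 hPv.1 hs.1]; rfl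
    · have h' : SeesDir Q v u := hor.resolve_left h
      have hs := yyO_spec h'
      have hPu := properV hN2 hproper u hu
      have hPv := properV hN2 hproper v hv
      have hlt := sep_lt hN2 hproper hv hu h'.1
      rw [gcurve, if_neg h]
      refine ⟨?_, ?_, ?_, ?_⟩
      · exact (continuous_bcurve.comp (continuous_const.sub continuous_id)).continuousOn
      · intro t1 ht1 t2 ht2 hteq
        have h1 : (1 : ℝ) - t1 ∈ Set.Icc (0:ℝ) 1 := by
          simp only [Set.mem_Icc] at ht1 ⊢; constructor <;> linarith [ht1.1, ht1.2]
        have h2 : (1 : ℝ) - t2 ∈ Set.Icc (0:ℝ) 1 := by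
          simp only [Set.mem_Icc] at ht2 ⊢; constructor <;> linarith [ht2.1, ht2.2]
        have := bcurve_injOn hlt h1 h2 hteq
        linarith
      · show bcurve v u (yyO Q v u) (1 - 0) = u.center
        norm_num
        rw [bcurve_one, curveY_right hPv.1 hPu.1 hs.1]; rfl
      · show bcurve v u (yyO Q v u) (1 - 1) = v.center
        norm_num
        rw [bcurve_zero, curveY_left hPv.1 hPu.1 hs.1]; rfl
  · -- pairwise disjointness
    intro u' v' hadj' hpairne
    obtain ⟨L, R', hLV, hRV, h1, hpr1, hcr1, him1, hlt1⟩ := gcurve_norm hN2 hproper hadj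
    obtain ⟨L2, R2, hL2V, hR2V, h2, hpr2, hcr2, him2, hlt2⟩ := gcurve_norm hN2 hproper hadj'
    rw [him1, him2, ← hcr1, ← hcr2]
    rintro p ⟨hp1, hp2⟩
    rw [mem_bcurve_iff hlt1] at hp1
    rw [mem_bcurve_iff hlt2] at hp2
    obtain ⟨x, ⟨hxa, hxb⟩, heqp1⟩ := hp1
    obtain ⟨x2, ⟨hxc, hxd⟩, heqp2⟩ := hp2
    have h12 := heqp1.symm.trans heqp2
    have hxx : x = x2 := congrArg Prod.fst h12
    subst hxx
    have heqy : curveY L R' (yyO Q L R') x = curveY L2 R2 (yyO Q L2 R2) x :=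
      congrArg Prod.snd h12
    have hpairne' : ({L, R'} : Set PRect) ≠ {L2, R2} := by
      rw [hpr1, hpr2]; exact hpairne
    rw [heqp1]
    exact key hN1 hN2 hproper hpack hQx hLV hRV hL2V hR2V h1 h2 hpairne' hxa hxb hxc hxd heqy
end

section
/- Let B = [0,N1] × [0,N2] with N1, N2 > 0, let ℓ > 0, and let Q be a packing contained in B in which every rectangle has width at least ℓ. If R ∈ Q satisfies x(R) < ℓ, then R sees the left side of B (i.e., R and R_left = [−1,0] × [0,N2] see each other). -/
/-- If every rectangle of a packing `Q` inside the box `[0,N1] × [0,N2]` has width at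
least `ℓ`, then any rectangle `R ∈ Q` with `x(R) < ℓ` sees the left side of the box. -/
theorem sees_left_side_of_close (N1 N2 ℓ : ℝ) (hN1 : 0 < N1) (hN2 : 0 < N2)
    (hℓ : 0 < ℓ)
    (Q : Set PRect) (hfin : Q.Finite)
    (hproper : ∀ R ∈ Q, R.Proper)
    (hpack : ∀ R ∈ Q, ∀ R' ∈ Q, R ≠ R' → ¬ R.Overlap R')
    (hsub : ∀ R ∈ Q, R.toSet ⊆ box N1 N2)
    (hwidth : ∀ R ∈ Q, ℓ ≤ R.w)
    (R : PRect) (hR : R ∈ Q) (hx : R.x < ℓ) :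
    Sees Q (Rleft N2) R := by
  have hRp := hproper R hR
  obtain ⟨hw, hh⟩ := hRp
  -- corners of R are in the box
  have hbl : (R.x, R.y) ∈ R.toSet := by
    simp [PRect.toSet, Set.mem_prod]
    constructor <;> linarith
  have htr : (R.x, R.y + R.h) ∈ R.toSet := by
    simp [PRect.toSet, Set.mem_prod]
    constructor <;> linarith
  have hbl' := hsub R hR hbl
  have htr' := hsub R hR htr
  simp [box, Set.mem_prod, Prod.le_def] at hbl' htr'
  have hx0 : 0 ≤ R.x := hbl'.1.1
  have hy0 : 0 ≤ R.y := hbl'.1.2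
  have hyN : R.y + R.h ≤ N2 := htr'.2.2
  -- bad heights
  have hbad : (Q.image (fun T => T.y) ∪ Q.image (fun T => T.y + T.h)).Finite :=
    (hfin.image _).union (hfin.image _)
  have hioo : (Set.Ioo R.y (R.y + R.h)).Infinite := Set.Ioo_infinite (by linarith)
  obtain ⟨yy, hyy⟩ := (hioo.diff hbad).nonempty
  obtain ⟨⟨hyy1, hyy2⟩, hyybad⟩ := hyy
  simp [Set.mem_union, Set.mem_image] at hyybad
  obtain ⟨hbad1, hbad2⟩ := hyybad
  have hne : Rleft N2 ≠ R := by
    intro h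
    have : (Rleft N2).x = R.x := by rw [h]
    simp [Rleft] at this
    linarith
  refine ⟨hne, Or.inl ?_⟩
  refine ⟨by simp [Rleft]; linarith, yy, by simp [Rleft]; linarith,
    by simp [Rleft]; linarith, hyy1, hyy2, ?_⟩
  intro T hT _ hTR xx hxx1 hxx2 hmem
  simp [Rleft] at hxx1 hxx2
  -- T contains (xx, yy); derive overlap of R and T
  simp [PRect.toSet, Set.mem_prod] at hmem
  have hTx1 := hmem.1.1
  have hTy1 := hmem.1.2
  have hTx2 := hmem.2.1
  have hTy2 := hmem.2.2
  obtain ⟨hTw, hTh⟩ := hproper T hT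
  have hTwl := hwidth T hT
  have hTbl : (T.x, T.y) ∈ T.toSet := by
    simp [PRect.toSet, Set.mem_prod]
    constructor <;> linarith
  have hTbl' := hsub T hT hTbl
  simp [box, Set.mem_prod, Prod.le_def] at hTbl'
  have hTx0 : 0 ≤ T.x := hTbl'.1.1
  -- T's open y-interval contains yy
  have hTy1' : T.y < yy := lt_of_le_of_ne hTy1 (fun h => hbad1 T hT h)
  have hTy2' : yy < T.y + T.h := lt_of_le_of_ne hTy2 (fun h => hbad2 T hT h.symm)
  -- x-overlap: pick x0 between R.x and min(T.x+T.w, R.x+R.w)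
  have hTright : R.x < T.x + T.w := by linarith
  set m := min (T.x + T.w) (R.x + R.w) with hm
  have hRm : R.x < m := lt_min hTright (by linarith)
  set x0 := (R.x + m) / 2 with hx0def
  have h1 : R.x < x0 := by simp [hx0def]; linarith
  have h2 : x0 < m := by simp [hx0def]; linarith
  have h3 : x0 < T.x + T.w := lt_of_lt_of_le h2 (min_le_left _ _)
  have h4 : x0 < R.x + R.w := lt_of_lt_of_le h2 (min_le_right _ _)
  have h5 : T.x < x0 := by linarith
  have hover : R.Overlap T := by
    refine ⟨(x0, yy), ?_, ?_⟩ <;> simp [PRect.inter, Set.mem_prod]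
    · exact ⟨⟨h1, h4⟩, hyy1, hyy2⟩
    · exact ⟨⟨h5, h3⟩, hTy1', hTy2'⟩
  exact hpack R hR T hT (fun h => hTR h.symm) hover
end

section
/- Let B = [0,N1] × [0,N2] with N1, N2 > 0, let ℓ > 0, let Z ⊆ B be a zone, and let Q be a packing with every rectangle of Q contained in Z and of width at least 2ℓ. Let G be the conflict graph of Q and let C ⊆ Q be an st-separator in G. Then the rectangles of Q ∖ C (i.e., their width–height pairs) can be packed inside the negatively shifted zone ←Z⟨ℓ⟩ = (⋃_{(x,y)∈Z} [x−ℓ, x] × {y}) ∩ ([0, N1−ℓ] × [0, N2]). -/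
/-- `C` is an `st`-separator in the conflict graph of `Q`: `C ⊆ Q` and every path from
`s = Rleft N2` to `t = Rright N1 N2` in the conflict graph contains a vertex of `C`. -/
def IsSTSeparator (N1 N2 : ℝ) (Q : Set PRect) (C : Set PRect) : Prop :=
  C ⊆ Q ∧
  ∀ (n : ℕ) (v : Fin (n + 1) → PRect),
    Function.Injective v →
    v 0 = Rleft N2 → v (Fin.last n) = Rright N1 N2 →
    (∀ i : Fin n, ConflictAdj N1 N2 Q (v i.castSucc) (v i.succ)) →
    ∃ i, v i ∈ C

/-- The negatively shifted zone `←Z⟨ℓ⟩ = (⋃_{(x,y)∈Z} [x−ℓ,x] × {y}) ∩ ([0,N1−ℓ] × [0,N2])`. -/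
def shiftNeg (Z : Set (ℝ × ℝ)) (ℓ N1 N2 : ℝ) : Set (ℝ × ℝ) :=
  {p | ∃ x : ℝ, (x, p.2) ∈ Z ∧ x - ℓ ≤ p.1 ∧ p.1 ≤ x} ∩
    (Set.Icc 0 (N1 - ℓ) ×ˢ Set.Icc 0 N2)

/-- The positively shifted zone `→Z⟨ℓ⟩ = (⋃_{(x,y)∈Z} [x,x+ℓ] × {y}) ∩ ([0,N1] × [0,N2])`. -/
def shiftPos (Z : Set (ℝ × ℝ)) (ℓ N1 N2 : ℝ) : Set (ℝ × ℝ) :=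
  {p | ∃ x : ℝ, (x, p.2) ∈ Z ∧ x ≤ p.1 ∧ p.1 ≤ x + ℓ} ∩
    (Set.Icc 0 N1 ×ˢ Set.Icc 0 N2)

/-- The rounded zone `↔Z⟨ℓ⟩ = (⋃_{(x,y)∈Z} [x−ℓ,x+ℓ] × {y}) ∩ ([0,N1] × [0,N2])`. -/
def shiftBoth (Z : Set (ℝ × ℝ)) (ℓ N1 N2 : ℝ) : Set (ℝ × ℝ) :=
  {p | ∃ x : ℝ, (x, p.2) ∈ Z ∧ x - ℓ ≤ p.1 ∧ p.1 ≤ x + ℓ} ∩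
    (Set.Icc 0 N1 ×ˢ Set.Icc 0 N2)

/-- The family of rectangles indexed by `F`, where the member indexed by `R ∈ F` has
width `dw R` and height `dh R`, can be packed inside the zone `Z`: there is an
assignment of pairwise non-overlapping placed rectangles of these dimensions, each
contained in `Z`. -/
def CanPackDims (F : Set PRect) (dw dh : PRect → ℝ) (Z : Set (ℝ × ℝ)) : Prop :=
  ∃ f : PRect → PRect,
    (∀ R ∈ F, (f R).w = dw R ∧ (f R).h = dh R ∧ (f R).toSet ⊆ Z) ∧
    ∀ R ∈ F, ∀ R' ∈ F, R ≠ R' → ¬ (f R).Overlap (f R')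

/-!
Let `A` be the set of vertices reachable from the left side `s` of the conflict graph by
paths avoiding `C`. The rectangles of `A` stay in place and all other rectangles of `Q \ C`
move left by `ℓ`. The key observation is that a horizontal gap narrower than every width
cannot contain a rectangle, so two rectangles sharing a height across a gap shorter than `ℓ`
see each other. Hence every rectangle within `ℓ` of the left side lies in `A`, so the moved
ones stay in the box; no rectangle of `A` comes within `ℓ` of the right side, since otherwise
`t` would be reachable avoiding `C`; and a moved rectangle cannot hit one of `A`, since before
the move it was within `ℓ` of it to the right and would itself lie in `A`.
-/

open SimpleGraph

namespace PRect

def shiftLeft (ℓ : ℝ) (R : PRect) : PRect := ⟨R.x - ℓ, R.y, R.w, R.h⟩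

def XSeparated (R T : PRect) : Prop := T.x + T.w ≤ R.x ∨ R.x + R.w ≤ T.x

theorem overlap_comm {R T : PRect} : R.Overlap T ↔ T.Overlap R := by
  rw [Overlap, Overlap, Set.inter_comm]

theorem mem_toSet_shiftLeft {R : PRect} {ℓ : ℝ} {p : ℝ × ℝ} :
    p ∈ (R.shiftLeft ℓ).toSet ↔ (p.1 + ℓ, p.2) ∈ R.toSet := by
  simp only [toSet, shiftLeft, Set.mem_prod, Set.mem_Icc]
  constructor <;> rintro ⟨⟨h1, h2⟩, h⟩ <;> exact ⟨⟨by linarith, by linarith⟩, h⟩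

theorem mem_inter_shiftLeft {R : PRect} {ℓ : ℝ} {p : ℝ × ℝ} :
    p ∈ (R.shiftLeft ℓ).inter ↔ (p.1 + ℓ, p.2) ∈ R.inter := by
  simp only [inter, shiftLeft, Set.mem_prod, Set.mem_Ioo]
  constructor <;> rintro ⟨⟨h1, h2⟩, h⟩ <;> exact ⟨⟨by linarith, by linarith⟩, h⟩

theorem overlap_shiftLeft_iff {R T : PRect} {ℓ : ℝ} :
    (R.shiftLeft ℓ).Overlap (T.shiftLeft ℓ) ↔ R.Overlap T := by
  constructor
  · rintro ⟨p, hR, hT⟩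
    exact ⟨_, mem_inter_shiftLeft.1 hR, mem_inter_shiftLeft.1 hT⟩
  · rintro ⟨p, hR, hT⟩
    exact ⟨(p.1 - ℓ, p.2), mem_inter_shiftLeft.2 (by simpa using hR),
      mem_inter_shiftLeft.2 (by simpa using hT)⟩

theorem xSeparated_of_not_overlap {R T : PRect} (hR : 0 < R.w) (hT : 0 < T.w)
    (h : ¬ R.Overlap T) {y : ℝ} (hyR : y ∈ Set.Ioo R.y (R.y + R.h))
    (hyT : y ∈ Set.Ioo T.y (T.y + T.h)) : R.XSeparated T := by
  by_contra hsep
  obtain ⟨h1, h2⟩ : R.x < T.x + T.w ∧ T.x < R.x + R.w := by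
    simpa only [XSeparated, not_or, not_le] using hsep
  obtain ⟨x, hxR, hxT⟩ : (Set.Ioo R.x (R.x + R.w) ∩ Set.Ioo T.x (T.x + T.w)).Nonempty := by
    rw [Set.Ioo_inter_Ioo, Set.nonempty_Ioo]
    exact max_lt (lt_min (by linarith) h1) (lt_min h2 (by linarith))
  exact h ⟨(x, y), ⟨hxR, hyR⟩, hxT, hyT⟩

theorem bounds_of_toSet_subset_box {R : PRect} {N1 N2 : ℝ} (hw : 0 ≤ R.w) (hh : 0 ≤ R.h)
    (h : R.toSet ⊆ box N1 N2) : 0 ≤ R.x ∧ R.x + R.w ≤ N1 ∧ 0 ≤ R.y ∧ R.y + R.h ≤ N2 := by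
  have hlo := h (show (R.x, R.y) ∈ R.toSet from
    ⟨⟨le_rfl, by linarith⟩, le_rfl, by linarith⟩)
  have hhi := h (show (R.x + R.w, R.y + R.h) ∈ R.toSet from
    ⟨⟨by linarith, le_rfl⟩, by linarith, le_rfl⟩)
  exact ⟨hlo.1.1, hhi.1.2, hlo.2.1, hhi.2.2⟩

theorem toSet_subset_shiftNeg {N1 N2 ℓ : ℝ} {Z : Set (ℝ × ℝ)} {R : PRect}
    (hZ : Z ⊆ box N1 N2) (hR : R.toSet ⊆ Z) (hℓ : 0 ≤ ℓ) (hright : R.x + R.w ≤ N1 - ℓ) :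
    R.toSet ⊆ shiftNeg Z ℓ N1 N2 := by
  intro p hp
  obtain ⟨⟨hx0, -⟩, hy⟩ := hZ (hR hp)
  exact ⟨⟨p.1, hR hp, by linarith, le_rfl⟩, ⟨hx0, by linarith [hp.1.2]⟩, hy⟩

theorem shiftLeft_toSet_subset_shiftNeg {N1 N2 ℓ : ℝ} {Z : Set (ℝ × ℝ)} {R : PRect}
    (hZ : Z ⊆ box N1 N2) (hR : R.toSet ⊆ Z) (hℓ : 0 ≤ ℓ) (hleft : ℓ ≤ R.x) :
    (R.shiftLeft ℓ).toSet ⊆ shiftNeg Z ℓ N1 N2 := by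
  intro p hp
  have hp' := mem_toSet_shiftLeft.1 hp
  obtain ⟨⟨-, hxN⟩, hy⟩ := hZ (hR hp')
  exact ⟨⟨p.1 + ℓ, hR hp', by linarith, by linarith⟩,
    ⟨by linarith [hp'.1.1], by linarith⟩, hy⟩

end PRect

theorem exists_mem_Ioo_forall_ne_edges {Q : Set PRect} (hQ : Q.Finite) {lo hi : ℝ}
    (h : lo < hi) : ∃ y ∈ Set.Ioo lo hi, ∀ T ∈ Q, y ≠ T.y ∧ y ≠ T.y + T.h := by
  have hE : (⋃ T ∈ Q, ({T.y, T.y + T.h} : Set ℝ)).Finite :=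
    hQ.biUnion fun T _ => (Set.finite_singleton _).insert _
  obtain ⟨y, hy, hyE⟩ := ((Set.Ioo_infinite h).sdiff hE).nonempty
  refine ⟨y, hy, fun T hT => ⟨fun h => hyE ?_, fun h => hyE ?_⟩⟩ <;>
    exact Set.mem_biUnion hT (by simp [h])

theorem seesDir_of_narrow_gap {Q : Set PRect} (hQ : Q.Finite) {R R' : PRect}
    (hR : 0 < R.w) (hR' : 0 < R'.w) (hle : R.x + R.w ≤ R'.x) {lo hi : ℝ} (hlohi : lo < hi)
    (hsubR : Set.Ioo lo hi ⊆ Set.Ioo R.y (R.y + R.h))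
    (hsubR' : Set.Ioo lo hi ⊆ Set.Ioo R'.y (R'.y + R'.h))
    (hsep : ∀ T ∈ Q, T ≠ R → T ≠ R' → ∀ y ∈ Set.Ioo lo hi,
      y ∈ Set.Ioo T.y (T.y + T.h) → R.XSeparated T ∧ R'.XSeparated T)
    (hnarrow : ∀ T ∈ Q, T ≠ R → T ≠ R' → R'.x - (R.x + R.w) < T.w) :
    SeesDir Q R R' := by
  -- off the horizontal edges of `Q`, meeting a rectangle means meeting its interior heights
  obtain ⟨y, hy, hyE⟩ := exists_mem_Ioo_forall_ne_edges hQ hlohi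
  refine ⟨hle, y, (hsubR hy).1, (hsubR hy).2, (hsubR' hy).1, (hsubR' hy).2, ?_⟩
  rintro T hT hTR hTR' x hx1 hx2 ⟨⟨hTx1, hTx2⟩, hTy1, hTy2⟩
  have hyT : y ∈ Set.Ioo T.y (T.y + T.h) :=
    ⟨lt_of_le_of_ne hTy1 (hyE T hT).1.symm, lt_of_le_of_ne hTy2 (hyE T hT).2⟩
  obtain ⟨h1, h2⟩ := hsep T hT hTR hTR' y hy hyT
  have := hnarrow T hT hTR hTR'
  rcases h1 with h1 | h1 <;> rcases h2 with h2 | h2 <;> linarith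

structure IsPackingIn (N1 N2 : ℝ) (Q : Set PRect) : Prop where
  finite : Q.Finite
  proper : ∀ R ∈ Q, R.Proper
  not_overlap : ∀ R ∈ Q, ∀ R' ∈ Q, R ≠ R' → ¬ R.Overlap R'
  subset_box : ∀ R ∈ Q, R.toSet ⊆ box N1 N2

def conflictGraph (N1 N2 : ℝ) (Q : Set PRect) : SimpleGraph PRect where
  Adj := ConflictAdj N1 N2 Q
  symm := ⟨fun _ _ ⟨hu, hv, hst, hne, hsees⟩ =>
    ⟨hv, hu, fun h => hst h.symm, hne.symm, hsees.symm⟩⟩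
  loopless := ⟨fun _ h => h.2.2.2.1 rfl⟩

namespace SimpleGraph

def reachableAvoiding {V : Type*} (G : SimpleGraph V) (C : Set V) (s : V) : Set V :=
  {v | ∃ p : G.Walk s v, ∀ u ∈ p.support, u ∉ C}

variable {V : Type*} {G : SimpleGraph V} {C : Set V} {s u v : V}

theorem start_mem_reachableAvoiding (hs : s ∉ C) : s ∈ G.reachableAvoiding C s :=
  ⟨Walk.nil, by simpa using hs⟩

theorem mem_reachableAvoiding_of_adj (hu : u ∈ G.reachableAvoiding C s) (h : G.Adj u v)
    (hv : v ∉ C) : v ∈ G.reachableAvoiding C s := by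
  obtain ⟨p, hp⟩ := hu
  refine ⟨p.concat h, fun w hw => ?_⟩
  rw [Walk.support_concat, List.mem_append, List.mem_singleton] at hw
  rcases hw with hw | rfl
  exacts [hp w hw, hv]

end SimpleGraph

theorem IsSTSeparator.rright_not_mem_reachableAvoiding {N1 N2 : ℝ} {Q C : Set PRect}
    (hsep : IsSTSeparator N1 N2 Q C) :
    Rright N1 N2 ∉ (conflictGraph N1 N2 Q).reachableAvoiding C (Rleft N2) := by
  classical
  rintro ⟨p, hp⟩
  set q := p.bypass
  have hinj : Function.Injective fun i : Fin (q.length + 1) => q.getVert i :=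
    fun i j h => Fin.ext (p.bypass_isPath.getVert_injOn (Nat.lt_succ_iff.1 i.2)
      (Nat.lt_succ_iff.1 j.2) h)
  obtain ⟨i, hi⟩ := hsep.2 q.length _ hinj q.getVert_zero q.getVert_length
    fun i => q.adj_getVert_succ i.2
  exact hp _ (p.support_bypass_subset_support (q.getVert_mem_support i)) hi

namespace IsPackingIn

variable {N1 N2 ℓ : ℝ} {Q C : Set PRect} {R R' : PRect}

theorem bounds (hQ : IsPackingIn N1 N2 Q) (hR : R ∈ Q) :
    0 ≤ R.x ∧ R.x + R.w ≤ N1 ∧ 0 ≤ R.y ∧ R.y + R.h ≤ N2 :=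
  R.bounds_of_toSet_subset_box (hQ.proper R hR).1.le (hQ.proper R hR).2.le (hQ.subset_box R hR)

theorem not_mem_sides (hQ : IsPackingIn N1 N2 Q) (hR : R ∈ Q) :
    R ∉ ({Rleft N2, Rright N1 N2} : Set PRect) := by
  have := hQ.bounds hR
  rintro (rfl | rfl) <;> simp only [Rleft, Rright] at this <;> linarith

theorem conflictAdj_of_seesDir (hQ : IsPackingIn N1 N2 Q)
    (hR : R ∈ Q ∪ {Rleft N2, Rright N1 N2}) (hR' : R' ∈ Q ∪ {Rleft N2, Rright N1 N2})
    (hQ' : R ∈ Q ∨ R' ∈ Q) (h : SeesDir Q R R') : (conflictGraph N1 N2 Q).Adj R R' := by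
  refine ⟨hR, hR', ?_, fun hRR' => ?_, Or.inl h⟩
  · rintro ⟨hRs, hR's⟩
    rcases hQ' with hQ' | hQ'
    exacts [hQ.not_mem_sides hQ' hRs, hQ.not_mem_sides hQ' hR's]
  · subst hRR'
    have := (hQ.proper R (hQ'.elim id id)).1
    linarith [h.1]

theorem seesDir_left_side (hQ : IsPackingIn N1 N2 Q) (hR : R ∈ Q)
    (hnarrow : ∀ T ∈ Q, R.x < T.w) : SeesDir Q (Rleft N2) R := by
  obtain ⟨hx, -, hy, hyN⟩ := hQ.bounds hR
  have hRp := hQ.proper R hR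
  have hs : (Rleft N2).x + (Rleft N2).w = 0 := by norm_num [Rleft]
  refine seesDir_of_narrow_gap hQ.finite (by norm_num [Rleft]) hRp.1 (by linarith)
    (by linarith [hRp.2] : R.y < R.y + R.h)
    (Set.Ioo_subset_Ioo (by simpa [Rleft]) (by simpa [Rleft])) subset_rfl
    (fun T hT _ hTR y hy hyT => ⟨Or.inr ?_, ?_⟩) fun T hT _ _ => ?_
  · linarith [(hQ.bounds hT).1]
  · exact PRect.xSeparated_of_not_overlap hRp.1 (hQ.proper T hT).1
      (hQ.not_overlap R hR T hT (Ne.symm hTR)) hy hyT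
  · linarith [hnarrow T hT]

theorem seesDir_right_side (hQ : IsPackingIn N1 N2 Q) (hR : R ∈ Q)
    (hnarrow : ∀ T ∈ Q, N1 - (R.x + R.w) < T.w) : SeesDir Q R (Rright N1 N2) := by
  obtain ⟨-, hx, hy, hyN⟩ := hQ.bounds hR
  have hRp := hQ.proper R hR
  refine seesDir_of_narrow_gap hQ.finite hRp.1 (by norm_num [Rright]) (by simpa [Rright])
    (by linarith [hRp.2] : R.y < R.y + R.h) subset_rfl
    (Set.Ioo_subset_Ioo (by simpa [Rright]) (by simpa [Rright]))
    (fun T hT hTR _ y hy hyT => ⟨?_, Or.inl ?_⟩) fun T hT _ _ => ?_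
  · exact PRect.xSeparated_of_not_overlap hRp.1 (hQ.proper T hT).1
      (hQ.not_overlap R hR T hT (Ne.symm hTR)) hy hyT
  · simpa [Rright] using (hQ.bounds hT).2.1
  · simpa [Rright] using hnarrow T hT

theorem seesDir_of_mem (hQ : IsPackingIn N1 N2 Q) (hR : R ∈ Q) (hR' : R' ∈ Q)
    (hle : R.x + R.w ≤ R'.x) {y : ℝ} (hyR : y ∈ Set.Ioo R.y (R.y + R.h))
    (hyR' : y ∈ Set.Ioo R'.y (R'.y + R'.h)) (hnarrow : ∀ T ∈ Q, R'.x - (R.x + R.w) < T.w) :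
    SeesDir Q R R' := by
  refine seesDir_of_narrow_gap hQ.finite (hQ.proper R hR).1 (hQ.proper R' hR').1 hle
    ((max_lt hyR.1 hyR'.1).trans (lt_min hyR.2 hyR'.2))
    (Set.Ioo_subset_Ioo (le_max_left _ _) (min_le_left _ _))
    (Set.Ioo_subset_Ioo (le_max_right _ _) (min_le_right _ _))
    (fun T hT hTR hTR' z hz hzT => ⟨?_, ?_⟩) fun T hT _ _ => hnarrow T hT
  · exact PRect.xSeparated_of_not_overlap (hQ.proper R hR).1 (hQ.proper T hT).1
      (hQ.not_overlap R hR T hT (Ne.symm hTR))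
      ⟨(le_max_left _ _).trans_lt hz.1, hz.2.trans_le (min_le_left _ _)⟩ hzT
  · exact PRect.xSeparated_of_not_overlap (hQ.proper R' hR').1 (hQ.proper T hT).1
      (hQ.not_overlap R' hR' T hT (Ne.symm hTR'))
      ⟨(le_max_right _ _).trans_lt hz.1, hz.2.trans_le (min_le_right _ _)⟩ hzT


theorem mem_reachableAvoiding_of_x_lt (hQ : IsPackingIn N1 N2 Q) (hC : C ⊆ Q) (hR : R ∈ Q)
    (hRC : R ∉ C) (hnarrow : ∀ T ∈ Q, R.x < T.w) :
    R ∈ (conflictGraph N1 N2 Q).reachableAvoiding C (Rleft N2) := by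
  have hs : Rleft N2 ∉ Q := fun h => hQ.not_mem_sides h (by simp)
  exact mem_reachableAvoiding_of_adj (start_mem_reachableAvoiding fun h => hs (hC h))
    (hQ.conflictAdj_of_seesDir (by simp) (Or.inl hR) (Or.inr hR)
      (hQ.seesDir_left_side hR hnarrow)) hRC

theorem exists_width_le_of_mem_reachableAvoiding (hQ : IsPackingIn N1 N2 Q)
    (hsep : IsSTSeparator N1 N2 Q C) (hR : R ∈ Q)
    (hRL : R ∈ (conflictGraph N1 N2 Q).reachableAvoiding C (Rleft N2)) :
    ∃ T ∈ Q, T.w ≤ N1 - (R.x + R.w) := by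
  by_contra! hnarrow
  have ht : Rright N1 N2 ∉ C := fun h => hQ.not_mem_sides (hsep.1 h) (by simp)
  exact hsep.rright_not_mem_reachableAvoiding <| mem_reachableAvoiding_of_adj hRL
    (hQ.conflictAdj_of_seesDir (Or.inl hR) (by simp) (Or.inl hR)
      (hQ.seesDir_right_side hR hnarrow)) ht

theorem not_overlap_shiftLeft (hQ : IsPackingIn N1 N2 Q) (hℓ : 0 ≤ ℓ)
    (hwide : ∀ T ∈ Q, ℓ < T.w) (hR : R ∈ Q)
    (hRL : R ∈ (conflictGraph N1 N2 Q).reachableAvoiding C (Rleft N2)) (hR' : R' ∈ Q)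
    (hR'C : R' ∉ C) (hR'L : R' ∉ (conflictGraph N1 N2 Q).reachableAvoiding C (Rleft N2)) :
    ¬ R.Overlap (R'.shiftLeft ℓ) := by
  rintro ⟨p, ⟨hxR, hyR⟩, hp'⟩
  obtain ⟨hxR', hyR'⟩ := PRect.mem_inter_shiftLeft.1 hp'
  have hne : R ≠ R' := fun h => hR'L (h ▸ hRL)
  rcases PRect.xSeparated_of_not_overlap (hQ.proper R hR).1 (hQ.proper R' hR').1
    (hQ.not_overlap R hR R' hR' hne) hyR hyR' with h | h
  · linarith [hxR.1, hxR'.2]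
  · refine hR'L (mem_reachableAvoiding_of_adj hRL (hQ.conflictAdj_of_seesDir (Or.inl hR)
      (Or.inl hR') (Or.inl hR) (hQ.seesDir_of_mem hR hR' h hyR hyR' fun T hT => ?_)) hR'C)
    linarith [hxR.2, hxR'.1, hwide T hT]

end IsPackingIn

theorem pack_in_shiftNeg_general (N1 N2 ℓ : ℝ) (hℓ : 0 < ℓ)
    (Z : Set (ℝ × ℝ)) (hZ : Z ⊆ box N1 N2)
    (Q : Set PRect) (hfin : Q.Finite)
    (hproper : ∀ R ∈ Q, R.Proper)
    (hpack : ∀ R ∈ Q, ∀ R' ∈ Q, R ≠ R' → ¬ R.Overlap R')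
    (hin : ∀ R ∈ Q, R.toSet ⊆ Z)
    (hwidth : ∀ R ∈ Q, 2 * ℓ ≤ R.w)
    (C : Set PRect) (hsep : IsSTSeparator N1 N2 Q C) :
    CanPackDims (Q \ C) (fun R => R.w) (fun R => R.h) (shiftNeg Z ℓ N1 N2) := by
  classical
  have hQ : IsPackingIn N1 N2 Q := ⟨hfin, hproper, hpack, fun R hR => (hin R hR).trans hZ⟩
  have hwide : ∀ T ∈ Q, ℓ < T.w := fun T hT => by linarith [hwidth T hT]
  set L := (conflictGraph N1 N2 Q).reachableAvoiding C (Rleft N2)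
  refine ⟨fun R => if R ∈ L then R else R.shiftLeft ℓ, fun R ⟨hRQ, hRC⟩ => ?_, ?_⟩
  · dsimp only
    split_ifs with hRL
    · obtain ⟨T, hT, hTw⟩ := hQ.exists_width_le_of_mem_reachableAvoiding hsep hRQ hRL
      exact ⟨rfl, rfl, R.toSet_subset_shiftNeg hZ (hin R hRQ) hℓ.le (by linarith [hwide T hT])⟩
    · have hleft : ℓ ≤ R.x := not_lt.1 fun h => hRL <|
        hQ.mem_reachableAvoiding_of_x_lt hsep.1 hRQ hRC fun T hT => h.trans (hwide T hT)
      exact ⟨rfl, rfl, R.shiftLeft_toSet_subset_shiftNeg hZ (hin R hRQ) hℓ.le hleft⟩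
  · rintro R ⟨hRQ, hRC⟩ R' ⟨hR'Q, hR'C⟩ hne
    dsimp only
    split_ifs with hRL hR'L hR'L
    · exact hpack R hRQ R' hR'Q hne
    · exact hQ.not_overlap_shiftLeft hℓ.le hwide hRQ hRL hR'Q hR'C hR'L
    · exact fun h => hQ.not_overlap_shiftLeft hℓ.le hwide hR'Q hR'L hRQ hRC hRL
        (PRect.overlap_comm.1 h)
    · exact PRect.overlap_shiftLeft_iff.not.2 (hpack R hRQ R' hR'Q hne)

/-- If `Q` is a packing inside a zone `Z ⊆ B` with all widths at least `2ℓ` and `C` is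
an `st`-separator in the conflict graph of `Q`, then the rectangles of `Q \ C` (their
width–height pairs) can be packed inside the negatively shifted zone `←Z⟨ℓ⟩`. -/
theorem pack_in_shiftNeg (N1 N2 ℓ : ℝ) (hN1 : 0 < N1) (hN2 : 0 < N2) (hℓ : 0 < ℓ)
    (Z : Set (ℝ × ℝ)) (hZ : Z ⊆ box N1 N2)
    (Q : Set PRect) (hfin : Q.Finite)
    (hproper : ∀ R ∈ Q, R.Proper)
    (hpack : ∀ R ∈ Q, ∀ R' ∈ Q, R ≠ R' → ¬ R.Overlap R')
    (hin : ∀ R ∈ Q, R.toSet ⊆ Z)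
    (hwidth : ∀ R ∈ Q, 2 * ℓ ≤ R.w)
    (C : Set PRect) (hsep : IsSTSeparator N1 N2 Q C) :
    CanPackDims (Q \ C) (fun R => R.w) (fun R => R.h) (shiftNeg Z ℓ N1 N2) :=
  pack_in_shiftNeg_general N1 N2 ℓ hℓ Z hZ Q hfin hproper hpack hin hwidth C hsep
end

section
/- Let N1, N2, ℓ > 0 and let Z ⊆ [0, N1−ℓ] × [0, N2] be a zone. Let Q be a packing with every rectangle of Q contained in Z and of width at least 2ℓ. Set ℓ' = ℓ²/N1. Then the ℓ-rounded versions of the rectangles of Q (width w replaced by ℓ'·⌈w/ℓ'⌉, height unchanged) can be packed inside the positively shifted zone →Z⟨ℓ⟩ = (⋃_{(x,y)∈Z} [x, x+ℓ] × {y}) ∩ ([0, N1] × [0, N2]). -/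
/-!
Stretch the plane horizontally by the factor `1 + ℓ / (2 N1)` and round each width up.
If `R` lies left of `R'`, their left ends are at least `R.w ≥ 2ℓ` apart, so stretching moves
them apart by at least `2ℓ · ℓ / (2 N1) = ℓ'`, which absorbs the growth `≤ ℓ'` of the rounded
width of `R`. A rectangle with left end `x` is displaced by `x ℓ / (2 N1)`, and since
`x + 2ℓ ≤ x + w ≤ N1` this displacement plus `ℓ'` is at most `ℓ`, which keeps the rounded
rectangle inside `→Z⟨ℓ⟩`.
-/

theorem mul_ceil_div_le_add {K : Type*} [Field K] [LinearOrder K] [IsStrictOrderedRing K]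
    [FloorRing K] (a : K) {b : K} (hb : 0 < b) : b * ⌈a / b⌉ ≤ a + b := by
  calc b * ⌈a / b⌉ ≤ b * (a / b + 1) := by gcongr; exact (Int.ceil_lt_add_one _).le
    _ = a + b := by field_simp

namespace PRect

theorem overlap_iff (R R' : PRect) :
    R.Overlap R' ↔
      max R.x R'.x < min (R.x + R.w) (R'.x + R'.w) ∧
        max R.y R'.y < min (R.y + R.h) (R'.y + R'.h) := by
  simp only [Overlap, inter, Set.prod_inter_prod, Set.Ioo_inter_Ioo, Set.prod_nonempty_iff,
    Set.nonempty_Ioo]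

noncomputable def stretchRound (ℓ N1 : ℝ) (R : PRect) : PRect :=
  ⟨(1 + ℓ / (2 * N1)) * R.x, R.y, (ℓ ^ 2 / N1) * (⌈R.w / (ℓ ^ 2 / N1)⌉ : ℝ), R.h⟩

theorem toSet_subset_shiftPos {Z : Set (ℝ × ℝ)} {ℓ N1 N2 : ℝ}
    (hZ : Z ⊆ Set.Icc 0 (N1 - ℓ) ×ˢ Set.Icc 0 N2) (hℓ : 0 ≤ ℓ) {R S : PRect}
    (hR : R.toSet ⊆ Z) (hw : 0 ≤ R.w) (hy : S.y = R.y) (hh : S.h = R.h) (hx : R.x ≤ S.x)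
    (hxw : S.x + S.w ≤ R.x + R.w + ℓ) : S.toSet ⊆ shiftPos Z ℓ N1 N2 := by
  rintro ⟨u, v⟩ ⟨⟨hu₁, hu₂⟩, hv⟩
  rw [hy, hh] at hv
  have hmem : (min u (R.x + R.w), v) ∈ Z :=
    hR ⟨⟨le_min (hx.trans hu₁) (by linarith), min_le_right _ _⟩, hv⟩
  have hle : u ≤ min u (R.x + R.w) + ℓ := by
    rcases le_total u (R.x + R.w) with h | h
    · rw [min_eq_left h]
      linarith
    · rw [min_eq_right h]
      linarith
  obtain ⟨⟨hx₀, hx₁⟩, hv₀, hv₁⟩ := hZ hmem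
  exact ⟨⟨_, hmem, min_le_left _ _, hle⟩, ⟨by linarith [min_le_left u (R.x + R.w)], by linarith⟩,
    hv₀, hv₁⟩

variable {ℓ N1 : ℝ}

theorem stretchRound_right_le (hN1 : 0 < N1) (hℓ : 0 < ℓ) {R R' : PRect} (hw : 2 * ℓ ≤ R.w)
    (h : R.x + R.w ≤ R'.x) :
    (stretchRound ℓ N1 R).x + (stretchRound ℓ N1 R).w ≤ (stretchRound ℓ N1 R').x := by
  have hround := mul_ceil_div_le_add R.w (by positivity : 0 < ℓ ^ 2 / N1)
  have hgap : ℓ ^ 2 / N1 ≤ (R'.x - R.x) * (ℓ / (2 * N1)) :=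
    calc ℓ ^ 2 / N1 = 2 * ℓ * (ℓ / (2 * N1)) := by field_simp
      _ ≤ (R'.x - R.x) * (ℓ / (2 * N1)) := by gcongr; linarith
  simp only [stretchRound]
  linarith

theorem stretchRound_not_overlap (hN1 : 0 < N1) (hℓ : 0 < ℓ) {R R' : PRect}
    (hw : 2 * ℓ ≤ R.w) (hw' : 2 * ℓ ≤ R'.w) (hRR' : ¬ R.Overlap R') :
    ¬ (stretchRound ℓ N1 R).Overlap (stretchRound ℓ N1 R') := by
  have h₁ := stretchRound_right_le hN1 hℓ hw (R' := R') (N1 := N1)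
  have h₂ := stretchRound_right_le hN1 hℓ hw' (R' := R) (N1 := N1)
  rw [overlap_iff] at hRR' ⊢
  simp only [stretchRound, max_lt_iff, lt_min_iff] at hRR' h₁ h₂ ⊢
  intro ⟨⟨⟨_, hx₁⟩, _, hx₂⟩, hy⟩
  by_cases hsep : R.x + R.w ≤ R'.x ∨ R'.x + R'.w ≤ R.x
  · rcases hsep with h | h
    · linarith [h₁ h]
    · linarith [h₂ h]
  · push Not at hsep
    exact hRR' ⟨⟨⟨by linarith, hsep.1⟩, hsep.2, by linarith⟩, hy⟩

theorem stretchRound_toSet_subset (hN1 : 0 < N1) (hℓ : 0 < ℓ) {N2 : ℝ} {Z : Set (ℝ × ℝ)}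
    (hZ : Z ⊆ Set.Icc 0 (N1 - ℓ) ×ˢ Set.Icc 0 N2) {R : PRect} (hR : R.toSet ⊆ Z)
    (hw : 2 * ℓ ≤ R.w) : (stretchRound ℓ N1 R).toSet ⊆ shiftPos Z ℓ N1 N2 := by
  intro p hp
  have hv : p.2 ∈ Set.Icc R.y (R.y + R.h) := hp.2
  have hx₀ : 0 ≤ R.x := (hZ (hR (⟨⟨le_rfl, by linarith⟩, hv⟩ : (R.x, p.2) ∈ R.toSet))).1.1
  have hx₁ : R.x + R.w ≤ N1 - ℓ :=
    (hZ (hR (⟨⟨by linarith, le_rfl⟩, hv⟩ : (R.x + R.w, p.2) ∈ R.toSet))).1.2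
  have hround := mul_ceil_div_le_add R.w (by positivity : 0 < ℓ ^ 2 / N1)
  have hshift : R.x * (ℓ / (2 * N1)) + ℓ ^ 2 / N1 ≤ ℓ :=
    calc R.x * (ℓ / (2 * N1)) + ℓ ^ 2 / N1 = (R.x + 2 * ℓ) * (ℓ / (2 * N1)) := by field_simp
      _ ≤ (2 * N1) * (ℓ / (2 * N1)) := by gcongr; linarith
      _ = ℓ := by field_simp
  refine toSet_subset_shiftPos (S := stretchRound ℓ N1 R) hZ hℓ.le hR (by linarith) rfl rfl ?_ ?_ hp
  · simp only [stretchRound]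
    linarith [mul_nonneg hx₀ (by positivity : (0 : ℝ) ≤ ℓ / (2 * N1))]
  · simp only [stretchRound]
    linarith

end PRect

open PRect in
theorem pack_rounded_in_shiftPos_general (N1 N2 ℓ : ℝ) (hN1 : 0 < N1)
    (hℓ : 0 < ℓ)
    (Z : Set (ℝ × ℝ)) (hZ : Z ⊆ Set.Icc 0 (N1 - ℓ) ×ˢ Set.Icc 0 N2)
    (Q : Set PRect)
    (hpack : ∀ R ∈ Q, ∀ R' ∈ Q, R ≠ R' → ¬ R.Overlap R')
    (hin : ∀ R ∈ Q, R.toSet ⊆ Z)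
    (hwidth : ∀ R ∈ Q, 2 * ℓ ≤ R.w) :
    CanPackDims Q
      (fun R => (ℓ ^ 2 / N1) * (⌈R.w / (ℓ ^ 2 / N1)⌉ : ℝ))
      (fun R => R.h)
      (shiftPos Z ℓ N1 N2) :=
  ⟨stretchRound ℓ N1,
    fun R hR => ⟨rfl, rfl, stretchRound_toSet_subset hN1 hℓ hZ (hin R hR) (hwidth R hR)⟩,
    fun R hR R' hR' hne =>
      stretchRound_not_overlap hN1 hℓ (hwidth R hR) (hwidth R' hR') (hpack R hR R' hR' hne)⟩

/-- If `Q` is a packing inside a zone `Z ⊆ [0, N1−ℓ] × [0, N2]` with all widths at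
least `2ℓ`, then the `ℓ`-rounded versions of the rectangles of `Q` (width `w` replaced
by `ℓ'·⌈w/ℓ'⌉` where `ℓ' = ℓ²/N1`, height unchanged) can be packed inside the
positively shifted zone `→Z⟨ℓ⟩`. -/
theorem pack_rounded_in_shiftPos (N1 N2 ℓ : ℝ) (hN1 : 0 < N1) (hN2 : 0 < N2)
    (hℓ : 0 < ℓ)
    (Z : Set (ℝ × ℝ)) (hZ : Z ⊆ Set.Icc 0 (N1 - ℓ) ×ˢ Set.Icc 0 N2)
    (Q : Set PRect) (hfin : Q.Finite)
    (hproper : ∀ R ∈ Q, R.Proper)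
    (hpack : ∀ R ∈ Q, ∀ R' ∈ Q, R ≠ R' → ¬ R.Overlap R')
    (hin : ∀ R ∈ Q, R.toSet ⊆ Z)
    (hwidth : ∀ R ∈ Q, 2 * ℓ ≤ R.w) :
    CanPackDims Q
      (fun R => (ℓ ^ 2 / N1) * (⌈R.w / (ℓ ^ 2 / N1)⌉ : ℝ))
      (fun R => R.h)
      (shiftPos Z ℓ N1 N2) :=
  pack_rounded_in_shiftPos_general N1 N2 ℓ hN1 hℓ Z hZ Q hpack hin hwidth
end

section
/- Let B = [0,N1] × [0,N2] with N1, N2 > 0, let ℓ > 0, and let S be a packing contained in B in which every rectangle has width at least 2ℓ. Let P = (s, R_1, R_2, …, R_m, t) be a path from s to t in the conflict graph of S, and for each i ∈ {0,1,…,m} let s_i = [x(R_i)+w(R_i), x(R_{i+1})] × {y_i} be a segment witnessing that R_i and R_{i+1} see each other (where R_0 = R_left and R_{m+1} = R_right). Let 𝒫 be the middle polyline of P, namely the union of: for each i ∈ [m], the vertical segment at abscissa x(R_i)+w(R_i)/2 between ordinates y(R_i)+h(R_i)/2 and y_{i−1}; for each i ∈ [m], the vertical segment at abscissa x(R_i)+w(R_i)/2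 between ordinates y(R_i)+h(R_i)/2 and y_i; and for each i ∈ {0,1,…,m}, the horizontal segment [max(x(R_i)+w(R_i)/2, 0), min(x(R_{i+1})+w(R_{i+1})/2, N1)] × {y_i}. Let Q = S ∖ {R_1,…,R_m}. Then 𝒫 does not cross the negatively shifted zone ←Q⟨ℓ⟩ = (⋃_{(x,y)∈⋃Q} [x−ℓ, x] × {y}) ∩ ([0, N1−ℓ] × [0, N2]), i.e., 𝒫 is disjoint from the interior of the shifted copy [x(R)−ℓ, x(R)+w(R)] × [y(R), y(R)+h(R)] of every R ∈ Q; symmetrically, 𝒫 does not cross →Q⟨ℓ⟩, and therefore 𝒫 does not cross ↔Q⟨ℓ⟩. -/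
/-- The vertical segment at abscissa `a` between ordinates `y1` and `y2`. -/
def vseg (a y1 y2 : ℝ) : Set (ℝ × ℝ) := {a} ×ˢ Set.Icc (min y1 y2) (max y1 y2)

/-- The horizontal segment `[x1, x2] × {b}`. -/
def hseg (x1 x2 b : ℝ) : Set (ℝ × ℝ) := Set.Icc x1 x2 ×ˢ {b}

/-- The abscissa of the center of a placed rectangle. -/
noncomputable def PRect.cx (R : PRect) : ℝ := R.x + R.w / 2

/-- The ordinate of the center of a placed rectangle. -/
noncomputable def PRect.cy (R : PRect) : ℝ := R.y + R.h / 2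

/-- The middle polyline of the path `(s = R 0, R 1, …, R m, R (m+1) = t)` with
witnessing segments at heights `yw 0, …, yw m`: the union of, for each `i ∈ [m]`, the
vertical segments at abscissa `x(Rᵢ) + w(Rᵢ)/2` between the ordinate of the center of
`Rᵢ` and `y_{i−1}` resp. `y_i`, and, for each `i ∈ {0,…,m}`, the horizontal segment
`[max(x(Rᵢ)+w(Rᵢ)/2, 0), min(x(R_{i+1})+w(R_{i+1})/2, N1)] × {yᵢ}`. -/
def midPolyline (m : ℕ) (R : ℕ → PRect) (yw : ℕ → ℝ) (N1 : ℝ) : Set (ℝ × ℝ) :=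
  (⋃ i ∈ Finset.Icc 1 m, vseg (R i).cx (R i).cy (yw (i - 1))) ∪
  (⋃ i ∈ Finset.Icc 1 m, vseg (R i).cx (R i).cy (yw i)) ∪
  (⋃ i ∈ Finset.Icc 0 m, hseg (max (R i).cx 0) (min (R (i + 1)).cx N1) (yw i))

lemma overlap_of (A B : PRect) (hA : 0 < A.w) (hB : 0 < B.w)
    (hx1 : B.x < A.x + A.w) (hx2 : A.x < B.x + B.w)
    (y : ℝ) (hy1 : A.y < y) (hy2 : y < A.y + A.h) (hy3 : B.y < y) (hy4 : y < B.y + B.h) :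
    A.Overlap B := by
  refine ⟨((max A.x B.x + min (A.x + A.w) (B.x + B.w)) / 2, y),
    ⟨⟨?_, ?_⟩, hy1, hy2⟩, ⟨?_, ?_⟩, hy3, hy4⟩ <;>
  · rcases max_cases A.x B.x with ⟨he, hle⟩ | ⟨he, hle⟩ <;>
      rcases min_cases (A.x + A.w) (B.x + B.w) with ⟨he2, hle2⟩ | ⟨he2, hle2⟩ <;>
      rw [he, he2] <;> linarith

/-- The middle polyline of an `s`-`t` path in the conflict graph of a packing `S` of
rectangles of width at least `2ℓ` does not cross the negatively shifted, positively
shifted, or rounded zone of the remaining rectangles: for every rectangle `T` of `S`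
not on the path, the middle polyline is disjoint from the interiors of
`[x(T)−ℓ, x(T)+w(T)] × [y(T), y(T)+h(T)]`, `[x(T), x(T)+w(T)+ℓ] × [y(T), y(T)+h(T)]`
and `[x(T)−ℓ, x(T)+w(T)+ℓ] × [y(T), y(T)+h(T)]`. -/
theorem middle_polyline_no_cross (N1 N2 ℓ : ℝ) (hN1 : 0 < N1) (hN2 : 0 < N2)
    (hℓ : 0 < ℓ)
    (S : Set PRect) (hfin : S.Finite)
    (hproper : ∀ R ∈ S, R.Proper)
    (hpack : ∀ R ∈ S, ∀ R' ∈ S, R ≠ R' → ¬ R.Overlap R')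
    (hsub : ∀ R ∈ S, R.toSet ⊆ box N1 N2)
    (hwidth : ∀ R ∈ S, 2 * ℓ ≤ R.w)
    (m : ℕ) (R : ℕ → PRect) (yw : ℕ → ℝ)
    (h0 : R 0 = Rleft N2) (hlast : R (m + 1) = Rright N1 N2)
    (hmem : ∀ i, 1 ≤ i → i ≤ m → R i ∈ S)
    (hinj : ∀ i j, i ≤ m + 1 → j ≤ m + 1 → R i = R j → i = j)
    (hwitness : ∀ i ≤ m,
      (R i).x + (R i).w ≤ (R (i + 1)).x ∧
      (R i).y < yw i ∧ yw i < (R i).y + (R i).h ∧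
      (R (i + 1)).y < yw i ∧ yw i < (R (i + 1)).y + (R (i + 1)).h ∧
      ∀ T ∈ S, T ≠ R i → T ≠ R (i + 1) →
        ∀ xx : ℝ, (R i).x + (R i).w ≤ xx → xx ≤ (R (i + 1)).x →
          (xx, yw i) ∉ T.toSet) :
    ∀ T ∈ S, (∀ i, 1 ≤ i → i ≤ m → T ≠ R i) →
      midPolyline m R yw N1 ∩
        (Set.Ioo (T.x - ℓ) (T.x + T.w) ×ˢ Set.Ioo T.y (T.y + T.h)) = ∅ ∧
      midPolyline m R yw N1 ∩
        (Set.Ioo T.x (T.x + T.w + ℓ) ×ˢ Set.Ioo T.y (T.y + T.h)) = ∅ ∧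
      midPolyline m R yw N1 ∩
        (Set.Ioo (T.x - ℓ) (T.x + T.w + ℓ) ×ˢ Set.Ioo T.y (T.y + T.h)) = ∅ := by
  intro T hT hTpath
  obtain ⟨hTw, hTh⟩ := hproper T hT
  have hTbox := hsub T hT
  have hc1 : ((T.x, T.y) : ℝ × ℝ) ∈ T.toSet :=
    ⟨⟨le_refl _, le_add_of_nonneg_right hTw.le⟩, le_refl _, le_add_of_nonneg_right hTh.le⟩
  have hc2 : ((T.x + T.w, T.y) : ℝ × ℝ) ∈ T.toSet :=
    ⟨⟨le_add_of_nonneg_right hTw.le, le_refl _⟩, le_refl _, le_add_of_nonneg_right hTh.le⟩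
  have hTx0 : 0 ≤ T.x := (hTbox hc1).1.1
  have hTxN : T.x + T.w ≤ N1 := (hTbox hc2).1.2
  have hTne : ∀ i, i ≤ m + 1 → T ≠ R i := by
    intro i hi hTeq
    rcases Nat.eq_zero_or_pos i with rfl | h1
    · rw [h0] at hTeq
      have : T.x = -1 := by rw [hTeq]; rfl
      linarith
    rcases eq_or_lt_of_le hi with rfl | h2
    · rw [hlast] at hTeq
      have hx : T.x = N1 := by rw [hTeq]; rfl
      have hw : T.w = 1 := by rw [hTeq]; rfl
      linarith
    exact hTpath i h1 (by omega) hTeq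
  have main : midPolyline m R yw N1 ∩
      (Set.Ioo (T.x - ℓ) (T.x + T.w + ℓ) ×ˢ Set.Ioo T.y (T.y + T.h)) = ∅ := by
    rw [Set.eq_empty_iff_forall_notMem]
    rintro ⟨px, py⟩ ⟨hpoly, hz⟩
    simp only [Set.mem_prod, Set.mem_Ioo] at hz
    obtain ⟨⟨hzx1, hzx2⟩, hzy1, hzy2⟩ := hz
    simp only [midPolyline, Set.mem_union, Set.mem_iUnion, Finset.mem_Icc, vseg, hseg,
      Set.mem_prod, Set.mem_singleton_iff, Set.mem_Icc] at hpoly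
    -- vertical segment helper
    have vert : ∀ i, 1 ≤ i → i ≤ m → ∀ yj,
        (R i).y < yj → yj < (R i).y + (R i).h →
        px = (R i).cx → min (R i).cy yj ≤ py → py ≤ max (R i).cy yj → False := by
      intro i hi1 hi2 yj hyj1 hyj2 hpx hmin hmax
      have hRS := hmem i hi1 hi2
      obtain ⟨hRw, hRh⟩ := hproper _ hRS
      have hR2l := hwidth _ hRS
      have hcy1 : (R i).y < (R i).cy := by simp [PRect.cy]; linarith
      have hcy2 : (R i).cy < (R i).y + (R i).h := by simp [PRect.cy]; linarith
      have h1 : (R i).y < min (R i).cy yj := lt_min hcy1 hyj1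
      have h2 : max (R i).cy yj < (R i).y + (R i).h := max_lt hcy2 hyj2
      have hcx : (R i).cx = (R i).x + (R i).w / 2 := rfl
      refine hpack (R i) hRS T hT (Ne.symm (hTne i (by omega)))
        (overlap_of (R i) T hRw hTw ?_ ?_ py (by linarith) (by linarith)
          (by linarith) (by linarith))
      · -- T.x < R i.x + R i.w
        rw [hpx, hcx] at hzx1; linarith
      · rw [hpx, hcx] at hzx2; linarith
    rcases hpoly with (⟨i, ⟨hi1, hi2⟩, hpx, hmin, hmax⟩ | ⟨i, ⟨hi1, hi2⟩, hpx, hmin, hmax⟩) |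
      ⟨i, ⟨-, hi2⟩, ⟨hpx1, hpx2⟩, hpy⟩
    · -- vseg with yw (i-1)
      obtain ⟨-, -, -, hy3, hy4, -⟩ := hwitness (i - 1) (by omega)
      have e : i - 1 + 1 = i := by omega
      rw [e] at hy3 hy4
      exact vert i hi1 hi2 _ hy3 hy4 hpx hmin hmax
    · obtain ⟨-, hy1, hy2, -, -, -⟩ := hwitness i hi2
      exact vert i hi1 hi2 _ hy1 hy2 hpx hmin hmax
    · -- horizontal segment at height yw i
      obtain ⟨hab, hy1, hy2, hy3, hy4, hwit⟩ := hwitness i hi2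
      subst hpy
      have hpxl : max (R i).cx 0 ≤ px := hpx1
      have hpxr : px ≤ min (R (i+1)).cx N1 := hpx2
      rcases lt_or_ge T.x ((R i).x + (R i).w) with hc | hc
      · -- T to the left of segment start: i ≥ 1 and overlap with R i
        rcases Nat.eq_zero_or_pos i with rfl | hi1
        · have : (R 0).x + (R 0).w = 0 := by rw [h0]; norm_num [Rleft]
          linarith
        have hRS := hmem i hi1 hi2
        obtain ⟨hRw, hRh⟩ := hproper _ hRS
        have hR2l := hwidth _ hRS
        have hcx : (R i).cx = (R i).x + (R i).w / 2 := rfl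
        have hpcx : (R i).x + (R i).w / 2 ≤ px := by
          rw [← hcx]; exact le_trans (le_max_left _ _) hpxl
        exact hpack (R i) hRS T hT (Ne.symm (hTne i (by omega)))
          (overlap_of (R i) T hRw hTw hc (by linarith) (yw i) hy1 hy2 hzy1 hzy2)
      rcases le_or_gt T.x ((R (i+1)).x) with hc2 | hc2
      · -- witness segment hits T
        exact hwit T hT (hTne i (by omega)) (hTne (i+1) (by omega)) T.x hc hc2
          ⟨⟨le_refl _, by linarith⟩, by linarith, by linarith⟩
      · -- T to the right: i < m and overlap with R (i+1)
        rcases eq_or_lt_of_le hi2 with rfl | him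
        · have : (R (i+1)).x = N1 := by rw [hlast]; rfl
          linarith
        have hRS := hmem (i+1) (by omega) (by omega)
        obtain ⟨hRw, hRh⟩ := hproper _ hRS
        have hR2l := hwidth _ hRS
        have hcx : (R (i+1)).cx = (R (i+1)).x + (R (i+1)).w / 2 := rfl
        have hpcx : px ≤ (R (i+1)).x + (R (i+1)).w / 2 := by
          rw [← hcx]; exact le_trans hpxr (min_le_left _ _)
        exact hpack (R (i+1)) hRS T hT (Ne.symm (hTne (i+1) (by omega)))
          (overlap_of (R (i+1)) T hRw hTw (by linarith) (by linarith) (yw i) hy3 hy4 hzy1 hzy2)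
  have sub : ∀ a b : ℝ, T.x - ℓ ≤ a → b ≤ T.x + T.w + ℓ →
      midPolyline m R yw N1 ∩ (Set.Ioo a b ×ˢ Set.Ioo T.y (T.y + T.h)) = ∅ := by
    intro a b ha hb
    apply Set.subset_empty_iff.mp
    refine subset_trans (Set.inter_subset_inter_right _
      (Set.prod_mono (Set.Ioo_subset_Ioo ha hb) subset_rfl)) ?_
    rw [main]
  exact ⟨sub _ _ (le_refl _) (by linarith), sub _ _ (by linarith) (le_refl _),
    sub _ _ (le_refl _) (le_refl _)⟩
end

section
/- Let G be a finite simple graph containing two distinct vertices s and t, and let m be a positive integer. Suppose that every path from s to t in G has at least m internal vertices. Then G contains an st-separator of size at most (|V(G)| − 2)/m, i.e., a set C ⊆ V(G) ∖ {s,t} with |C| ≤ (|V(G)| − 2)/m such that every path from s to t in G contains a vertex of C. -/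
open SimpleGraph

/-- Distance to a neighbor increases by at most 1. -/
lemma dist_succ_of_adj {V : Type*} (G : SimpleGraph V) {s u w : V}
    (hr : G.Reachable s u) (h : G.Adj u w) : G.dist s w ≤ G.dist s u + 1 := by
  obtain ⟨p, hp⟩ := hr.exists_walk_length_eq_dist
  have := G.dist_le (p.concat h)
  rwa [SimpleGraph.Walk.length_concat, hp] at this

/-- Discrete intermediate value along a walk: if the start is at distance ≤ i from `s`
and the end is at distance > i, some vertex on the walk is at distance exactly `i`. -/
lemma exists_dist_eq_on_walk {V : Type*} (G : SimpleGraph V) (s : V) (i : ℕ) :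
    ∀ {u t : V} (p : G.Walk u t), G.Reachable s u → G.dist s u ≤ i →
      i < G.dist s t → ∃ v ∈ p.support, G.dist s v = i := by
  intro u t p
  induction p with
  | nil =>
    intro _ h1 h2
    omega
  | @cons u w t h q ih =>
    intro hr h1 h2
    rcases eq_or_lt_of_le h1 with heq | hlt
    · exact ⟨u, by simp, heq⟩
    · have hrw : G.Reachable s w := hr.trans ⟨h.toWalk⟩
      have hw : G.dist s w ≤ i := le_trans (dist_succ_of_adj G hr h) (by omega)
      obtain ⟨v, hv, hv2⟩ := ih hrw hw h2
      exact ⟨v, by simp [hv], hv2⟩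

/-- If in a finite simple graph `G` every path from `s` to `t` has at least `m ≥ 1`
internal vertices (equivalently, length at least `m + 1`), then there is an
`st`-separator `C` (a set of vertices avoiding `s` and `t` that meets every `s`-`t`
path) of size at most `(|V(G)| − 2) / m`. -/
theorem exists_small_st_separator {V : Type*} [Fintype V] [DecidableEq V]
    (G : SimpleGraph V) (s t : V) (hst : s ≠ t) (m : ℕ) (hm : 0 < m)
    (hlong : ∀ p : G.Walk s t, p.IsPath → m + 1 ≤ p.length) :
    ∃ C : Finset V, s ∉ C ∧ t ∉ C ∧
      (C.card : ℝ) ≤ ((Fintype.card V : ℝ) - 2) / (m : ℝ) ∧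
      ∀ p : G.Walk s t, p.IsPath → ∃ v ∈ C, v ∈ p.support := by
  classical
  have hn : 2 ≤ Fintype.card V := by
    have : Nontrivial V := ⟨s, t, hst⟩
    exact Fintype.one_lt_card
  have hn2 : (0:ℝ) ≤ ((Fintype.card V : ℝ) - 2) := by
    have : (2:ℝ) ≤ (Fintype.card V : ℝ) := by exact_mod_cast hn
    linarith
  by_cases hreach : G.Reachable s t
  · -- distance from s to t is at least m+1
    obtain ⟨p0, hp0, hl0⟩ := hreach.exists_path_of_dist
    have hdist : m + 1 ≤ G.dist s t := hl0 ▸ hlong p0 hp0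
    set f : ℕ → Finset V := fun i => Finset.univ.filter (fun v => G.dist s v = i) with hf
    -- the level sets for i ∈ [1, m] are disjoint subsets of V \ {s, t}
    have hsum : ∑ i ∈ Finset.Icc 1 m, (f i).card ≤ Fintype.card V - 2 := by
      have hdisj : (Finset.Icc 1 m : Set ℕ).PairwiseDisjoint f := by
        intro a _ b _ hab
        simp only [Finset.disjoint_left, hf, Finset.mem_filter]
        rintro x ⟨_, hx1⟩ ⟨_, hx2⟩
        exact hab (hx1 ▸ hx2)
      rw [← Finset.card_biUnion (fun a ha b hb hab => hdisj ha hb hab)]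
      have hsub : (Finset.Icc 1 m).biUnion f ⊆ Finset.univ \ {s, t} := by
        intro v hv
        simp only [Finset.mem_biUnion, Finset.mem_Icc, hf, Finset.mem_filter] at hv
        obtain ⟨i, ⟨hi1, hi2⟩, _, hvd⟩ := hv
        simp only [Finset.mem_sdiff, Finset.mem_univ, true_and, Finset.mem_insert,
          Finset.mem_singleton]
        push_neg
        constructor
        · rintro rfl; rw [G.dist_self] at hvd; omega
        · rintro rfl; omega
      calc ((Finset.Icc 1 m).biUnion f).card ≤ (Finset.univ \ {s, t}).card :=
            Finset.card_le_card hsub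
        _ = Fintype.card V - 2 := by
            rw [Finset.card_sdiff_of_subset (by simp)]
            simp [Finset.card_insert_of_notMem, hst]
    -- choose a smallest level set
    have hex : ∃ i ∈ Finset.Icc 1 m, m * (f i).card ≤ Fintype.card V - 2 := by
      by_contra hcon
      push_neg at hcon
      have h1 : ∀ i ∈ Finset.Icc 1 m, Fintype.card V - 2 + 1 ≤ m * (f i).card :=
        fun i hi => by have := hcon i hi; omega
      have h2 : m * (Fintype.card V - 2 + 1) ≤ m * (Fintype.card V - 2) := by
        calc m * (Fintype.card V - 2 + 1)
            = ∑ _i ∈ Finset.Icc 1 m, (Fintype.card V - 2 + 1) := by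
              rw [Finset.sum_const, Nat.card_Icc, smul_eq_mul, Nat.add_sub_cancel]
          _ ≤ ∑ i ∈ Finset.Icc 1 m, m * (f i).card := Finset.sum_le_sum h1
          _ = m * ∑ i ∈ Finset.Icc 1 m, (f i).card := by rw [Finset.mul_sum]
          _ ≤ m * (Fintype.card V - 2) := Nat.mul_le_mul_left m hsum
      have := Nat.le_of_mul_le_mul_left h2 hm
      omega
    obtain ⟨i, hi, hcard⟩ := hex
    simp only [Finset.mem_Icc] at hi
    refine ⟨f i, ?_, ?_, ?_, ?_⟩
    · simp only [hf, Finset.mem_filter, G.dist_self]; omega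
    · simp only [hf, Finset.mem_filter]; omega
    · rw [le_div_iff₀ (by exact_mod_cast hm)]
      have : ((m * (f i).card : ℕ) : ℝ) ≤ ((Fintype.card V - 2 : ℕ) : ℝ) := by
        exact_mod_cast hcard
      rw [Nat.cast_mul, Nat.cast_sub hn] at this
      push_cast at this ⊢
      linarith
    · intro p hp
      have hit : i < G.dist s t := by omega
      obtain ⟨v, hv, hvd⟩ := exists_dist_eq_on_walk G s i p (Reachable.refl s)
        (by rw [G.dist_self]; omega) hit
      exact ⟨v, by simp [hf, hvd], hv⟩
  · refine ⟨∅, by simp, by simp, ?_, ?_⟩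
    · simp only [Finset.card_empty, Nat.cast_zero]
      positivity
    · intro p _
      exact absurd ⟨p⟩ hreach
end

section
/- Let R be a finite set of rectangles (width–height pairs of positive integers), let k be a positive integer, and let col : R → {1,…,k} be a coloring. Suppose that some subset S ⊆ R with |S| = k' ≤ k on which col is injective can be packed inside a zone Z ⊆ ℝ². Then there exists a subset S' ⊆ reduce_k(R, col) with |S'| = k' on which col is injective that can be packed inside Z. -/
/-- A finite family of rectangles (width–height pairs of natural numbers) can be
packed inside a zone `Z`: there is an assignment of pairwise non-overlapping placed
rectangles of matching dimensions, each contained in `Z`. -/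
def RectCanPack (F : Finset (ℕ × ℕ)) (Z : Set (ℝ × ℝ)) : Prop :=
  ∃ f : ℕ × ℕ → PRect,
    (∀ r ∈ F, (f r).w = (r.1 : ℝ) ∧ (f r).h = (r.2 : ℝ) ∧ (f r).toSet ⊆ Z) ∧
    ∀ r ∈ F, ∀ r' ∈ F, r ≠ r' → ¬ (f r).Overlap (f r')

/-- `red = reduce_k(R, col)`: there is a choice, for each width `w` and color `i`, of
a set `sel w i` of `min k #{r ∈ R : w(r) = w, col r = i}` rectangles of smallest
height among the rectangles of `R` of width `w` and color `i`, such that `red` is the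
union of the sets `sel w i`. -/
def IsReduce (k : ℕ) (R : Finset (ℕ × ℕ)) (col : ℕ × ℕ → Fin k)
    (red : Finset (ℕ × ℕ)) : Prop :=
  ∃ sel : ℕ → Fin k → Finset (ℕ × ℕ),
    (∀ w i, sel w i ⊆ R.filter (fun r => r.1 = w ∧ col r = i)) ∧
    (∀ w i, (sel w i).card = min k (R.filter (fun r => r.1 = w ∧ col r = i)).card) ∧
    (∀ w i, ∀ a ∈ sel w i, ∀ b ∈ R.filter (fun r => r.1 = w ∧ col r = i),
      b ∉ sel w i → a.2 ≤ b.2) ∧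
    red = R.filter (fun r => r ∈ sel r.1 (col r))

/-- Replacement lemma: if a `col`-rainbow subset `S ⊆ R` of size `k' ≤ k` can be
packed inside a zone `Z`, then some `col`-rainbow subset of `reduce_k(R, col)` of
size `k'` can also be packed inside `Z`. -/
theorem reduce_replacement (k k' : ℕ) (hk : 0 < k) (R : Finset (ℕ × ℕ))
    (hpos : ∀ r ∈ R, 0 < r.1 ∧ 0 < r.2)
    (col : ℕ × ℕ → Fin k) (red : Finset (ℕ × ℕ)) (hred : IsReduce k R col red)
    (Z : Set (ℝ × ℝ)) (S : Finset (ℕ × ℕ)) (hS : S ⊆ R)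
    (hcard : S.card = k') (hk' : k' ≤ k)
    (hinj : Set.InjOn col (S : Set (ℕ × ℕ)))
    (hpack : RectCanPack S Z) :
    ∃ S' : Finset (ℕ × ℕ), S' ⊆ red ∧ S'.card = k' ∧
      Set.InjOn col (S' : Set (ℕ × ℕ)) ∧ RectCanPack S' Z := by
  classical
  obtain ⟨sel, hsub, hcards, hmin, hredeq⟩ := hred
  obtain ⟨f, hf, hov⟩ := hpack
  -- replacement: each r ∈ S has a substitute in red with same width, same color, height ≤
  have hrep : ∀ r ∈ S, ∃ x, x ∈ red ∧ x.1 = r.1 ∧ col x = col r ∧ x.2 ≤ r.2 := by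
    intro r hr
    by_cases hrd : r ∈ red
    · exact ⟨r, hrd, rfl, rfl, le_rfl⟩
    have hrR := hS hr
    have hrf : r ∈ R.filter (fun t => t.1 = r.1 ∧ col t = col r) := by
      simp [Finset.mem_filter, hrR]
    have hrsel : r ∉ sel r.1 (col r) := by
      intro hmem
      exact hrd (by rw [hredeq]; exact Finset.mem_filter.mpr ⟨hrR, hmem⟩)
    have hne : (sel r.1 (col r)).Nonempty := by
      rw [← Finset.card_pos, hcards]
      by_cases hc : (R.filter (fun t => t.1 = r.1 ∧ col t = col r)).card ≤ k
      · exfalso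
        have heq : sel r.1 (col r) = R.filter (fun t => t.1 = r.1 ∧ col t = col r) :=
          Finset.eq_of_subset_of_card_le (hsub _ _) (by rw [hcards]; omega)
        exact hrsel (heq ▸ hrf)
      · omega
    obtain ⟨x, hx⟩ := hne
    have hxf := hsub _ _ hx
    rw [Finset.mem_filter] at hxf
    obtain ⟨hxR, hx1, hxc⟩ := hxf
    refine ⟨x, ?_, hx1, hxc, hmin _ _ _ hx _ hrf hrsel⟩
    rw [hredeq]
    refine Finset.mem_filter.mpr ⟨hxR, ?_⟩
    rw [hx1, hxc]; exact hx
  -- the replacement function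
  set g : ℕ × ℕ → ℕ × ℕ := fun r => if hr : r ∈ S then (hrep r hr).choose else r with hg
  have hgred : ∀ r ∈ S, g r ∈ red := by
    intro r hr; simp only [hg, dif_pos hr]; exact (hrep r hr).choose_spec.1
  have hgw : ∀ r ∈ S, (g r).1 = r.1 := by
    intro r hr; simp only [hg, dif_pos hr]; exact (hrep r hr).choose_spec.2.1
  have hgc : ∀ r ∈ S, col (g r) = col r := by
    intro r hr; simp only [hg, dif_pos hr]; exact (hrep r hr).choose_spec.2.2.1
  have hgh : ∀ r ∈ S, (g r).2 ≤ r.2 := by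
    intro r hr; simp only [hg, dif_pos hr]; exact (hrep r hr).choose_spec.2.2.2
  have hginj : ∀ a ∈ S, ∀ b ∈ S, g a = g b → a = b := by
    intro a ha b hb hab
    apply hinj (by exact_mod_cast ha) (by exact_mod_cast hb)
    rw [← hgc a ha, ← hgc b hb, hab]
  refine ⟨S.image g, ?_, ?_, ?_, ?_⟩
  · intro x hx
    obtain ⟨r, hr, rfl⟩ := Finset.mem_image.mp hx
    exact hgred r hr
  · rw [Finset.card_image_of_injOn (fun a ha b hb => hginj a ha b hb), hcard]
  · intro x hx y hy hxy
    simp only [Finset.coe_image, Set.mem_image, Finset.mem_coe] at hx hy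
    obtain ⟨a, ha, rfl⟩ := hx
    obtain ⟨b, hb, rfl⟩ := hy
    rw [hgc a ha, hgc b hb] at hxy
    rw [hinj (by exact_mod_cast ha) (by exact_mod_cast hb) hxy]
  · -- packing
    set ginv : ℕ × ℕ → ℕ × ℕ := fun x =>
      if h : ∃ r ∈ S, g r = x then h.choose else x with hgi
    have hginv : ∀ x ∈ S.image g, ginv x ∈ S ∧ g (ginv x) = x := by
      intro x hx
      obtain ⟨r, hr, hrx⟩ := Finset.mem_image.mp hx
      have hex : ∃ r ∈ S, g r = x := ⟨r, hr, hrx⟩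
      simp only [hgi, dif_pos hex]
      exact ⟨hex.choose_spec.1, hex.choose_spec.2⟩
    refine ⟨fun x => ⟨(f (ginv x)).x, (f (ginv x)).y, (x.1 : ℝ), (x.2 : ℝ)⟩, ?_, ?_⟩
    · intro x hx
      obtain ⟨hgS, hgx⟩ := hginv x hx
      obtain ⟨hw, hh, hZ⟩ := hf _ hgS
      refine ⟨rfl, rfl, Set.Subset.trans ?_ hZ⟩
      unfold PRect.toSet
      dsimp only
      apply Set.prod_mono
      · apply Set.Icc_subset_Icc le_rfl
        rw [hw]
        have h1 : x.1 = (ginv x).1 := by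
          have := hgw _ hgS; rw [hgx] at this; exact this
        rw [h1]
      · apply Set.Icc_subset_Icc le_rfl
        rw [hh]
        have h2 : x.2 ≤ (ginv x).2 := by
          have := hgh _ hgS; rw [hgx] at this; exact this
        gcongr
    · intro x hx y hy hxy
      obtain ⟨hxS, hgx⟩ := hginv x hx
      obtain ⟨hyS, hgy⟩ := hginv y hy
      have hne : ginv x ≠ ginv y := by
        intro h; exact hxy (by rw [← hgx, ← hgy, h])
      have hno := hov _ hxS _ hyS hne
      intro hcon
      apply hno
      obtain ⟨p, hp1, hp2⟩ := hcon
      have key : ∀ z, ∀ hz : z ∈ S.image g, ∀ q,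
          q ∈ (PRect.mk (f (ginv z)).x (f (ginv z)).y (z.1:ℝ) (z.2:ℝ)).inter →
          q ∈ (f (ginv z)).inter := by
        intro z hz q hq
        obtain ⟨hzS, hgz⟩ := hginv z hz
        obtain ⟨hw, hh, _⟩ := hf _ hzS
        unfold PRect.inter at hq ⊢
        dsimp only at hq
        refine ⟨?_, ?_⟩
        · have hz1 : z.1 = (ginv z).1 := by
            have := hgw _ hzS; rw [hgz] at this; exact this
          have h1 := hq.1
          rw [hw]; rw [hz1] at h1; exact h1
        · have hz2 : (z.2:ℝ) ≤ ((ginv z).2 : ℝ) := by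
            have := hgh _ hzS; rw [hgz] at this; exact_mod_cast this
          have h2 := hq.2
          rw [hh]
          exact Set.Ioo_subset_Ioo le_rfl (by linarith [h2.2]) h2
      exact ⟨p, key x hx p hp1, key y hy p hp2⟩
end
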